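/- arXiv:2409.17842 — 6 statements merged into one kernel-verified Lean document; each statement's English description precedes it below -/
import Mathlib

section
/- Let λ be a Young diagram with n = ℓ(λ), let t_1, t_2, … be indeterminates with t_0 := 0, and define z_{−n+i} := t_{i+1} − t_i for i ≥ 0 (so z_c is defined for all integers c ≥ −n). Then: (a) for every box (i,j) ∈ λ, z(H(i,j)) = t_{λ_i+n−i+1} − t_{j+n−λ'_j}, where H(i,j) is the hook of (i,j) in λ and z(S) := Σ_{(a,b) ∈ S} z_{b−a}; and (b) for every partition ν with ν ⊆ λ and ℓ(ν) ≤ n, z(λ/ν) = Σ_{i=1}^{n} ( t_{λ_i+n−i+1} − t_{ν_i+n−i+1} ). Consequently the multivariate hook-length formula in the z-variables and the one in the t-variables are equivalent. -/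
open scoped Classical

noncomputable section

/-- The hook of the cell `u` in `lam`: the cells of `lam` in the same row weakly to the right
of `u`, together with the cells in the same column strictly below `u`. -/
def hookCells (lam : YoungDiagram) (u : ℕ × ℕ) : Finset (ℕ × ℕ) :=
  lam.cells.filter (fun v => (v.1 = u.1 ∧ u.2 ≤ v.2) ∨ (v.2 = u.2 ∧ u.1 < v.1))

/-- The field of rational functions over `ℚ` in the indeterminates `t 1, t 2, …`. -/
abbrev K2 : Type := FractionRing (MvPolynomial ℕ ℚ)

/-- The indeterminates `t i` for `i ≥ 1`, with the convention `t 0 = 0`. -/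
def t : ℕ → K2 := fun i =>
  if i = 0 then 0 else algebraMap (MvPolynomial ℕ ℚ) K2 (MvPolynomial.X i)

/-- `z_{-n+i} := t_{i+1} - t_i` for `i ≥ 0`; that is, `z c = t (c+n+1) - t (c+n)`
for all integers `c ≥ -n`. -/
def zOfT (n : ℕ) : ℤ → K2 := fun c => t (c + n + 1).toNat - t (c + n).toNat

/-! With `tShift n c = t_{c+n}` we have `z_c = tShift n (c + 1) - tShift n c`. The content of a
cell grows by one along a row and drops by one down a column, so the `z`-sum over a segment of a
row or of a column telescopes. A hook is one row segment and one column segment; and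
`z(λ/ν) = z(λ) - z(ν)`, where the `z`-sum over a diagram with at most `n` rows is the sum of
its `n` row telescopes. -/

open Finset

def tShift (n : ℕ) (c : ℤ) : K2 := t (c + n).toNat

lemma zOfT_eq_tShift_sub (n : ℕ) (c : ℤ) : zOfT n c = tShift n (c + 1) - tShift n c := by
  simp only [zOfT, tShift]
  ring_nf

lemma tShift_natCast_sub {n b i : ℕ} (h : i ≤ b + n) : tShift n ((b : ℤ) - i) = t (b + n - i) := by
  simp only [tShift]
  congr 1
  omega

lemma sum_zOfT_row (n i : ℕ) {a b : ℕ} (hab : a ≤ b) :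
    ∑ j ∈ Ico a b, zOfT n ((j : ℤ) - i) = tShift n ((b : ℤ) - i) - tShift n ((a : ℤ) - i) := by
  rw [← sum_Ico_sub (f := fun k : ℕ => tShift n ((k : ℤ) - i)) hab]
  refine sum_congr rfl fun j _ => ?_
  rw [zOfT_eq_tShift_sub]
  push_cast
  ring_nf

lemma sum_zOfT_col (n j : ℕ) {a b : ℕ} (hab : a ≤ b) :
    ∑ i ∈ Ico a b, zOfT n ((j : ℤ) - i)
      = tShift n (((j + 1 : ℕ) : ℤ) - a) - tShift n (((j + 1 : ℕ) : ℤ) - b) := by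
  rw [← neg_sub, ← sum_Ico_sub (f := fun k : ℕ => tShift n (((j + 1 : ℕ) : ℤ) - k)) hab,
    ← sum_neg_distrib]
  refine sum_congr rfl fun i _ => ?_
  rw [zOfT_eq_tShift_sub, neg_sub]
  push_cast
  ring_nf

namespace YoungDiagram

lemma sum_cells_eq_sum_rows {M : Type*} [AddCommMonoid M] (μ : YoungDiagram) {n : ℕ}
    (hμ : μ.colLen 0 ≤ n) (f : ℕ → ℕ → M) :
    ∑ c ∈ μ.cells, f c.1 c.2 = ∑ i ∈ range n, ∑ j ∈ range (μ.rowLen i), f i j := by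
  refine sum_finset_product' _ _ _ fun ⟨i, j⟩ => ?_
  simp only [mem_cells, mem_range]
  refine ⟨fun h => ⟨?_, mem_iff_lt_rowLen.1 h⟩, fun h => mem_iff_lt_rowLen.2 h.2⟩
  have : (i, 0) ∈ μ := μ.up_left_mem le_rfl (Nat.zero_le j) h
  exact (mem_iff_lt_colLen.1 this).trans_le hμ

end YoungDiagram

lemma hookCells_eq (lam : YoungDiagram) (i j : ℕ) :
    hookCells lam (i, j) = {i} ×ˢ Ico j (lam.rowLen i) ∪ Ico (i + 1) (lam.colLen j) ×ˢ {j} := by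
  ext ⟨a, b⟩
  simp only [hookCells, mem_filter, YoungDiagram.mem_cells, mem_union, mem_product,
    mem_singleton, mem_Ico]
  constructor
  · rintro ⟨h, ⟨rfl, hb⟩ | ⟨rfl, ha⟩⟩
    · exact Or.inl ⟨rfl, hb, YoungDiagram.mem_iff_lt_rowLen.1 h⟩
    · exact Or.inr ⟨⟨ha, YoungDiagram.mem_iff_lt_colLen.1 h⟩, rfl⟩
  · rintro (⟨rfl, hb, h⟩ | ⟨⟨ha, h⟩, rfl⟩)
    · exact ⟨YoungDiagram.mem_iff_lt_rowLen.2 h, Or.inl ⟨rfl, hb⟩⟩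
    · exact ⟨YoungDiagram.mem_iff_lt_colLen.2 h, Or.inr ⟨rfl, ha⟩⟩

lemma sum_hookCells {M : Type*} [AddCommMonoid M] (lam : YoungDiagram) (i j : ℕ)
    (f : ℕ → ℕ → M) :
    ∑ c ∈ hookCells lam (i, j), f c.1 c.2
      = ∑ j' ∈ Ico j (lam.rowLen i), f i j' + ∑ i' ∈ Ico (i + 1) (lam.colLen j), f i' j := by
  have hdisj : Disjoint ({i} ×ˢ Ico j (lam.rowLen i)) (Ico (i + 1) (lam.colLen j) ×ˢ {j}) := by
    simp only [disjoint_left, mem_product, mem_singleton, mem_Ico]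
    omega
  rw [hookCells_eq, sum_union hdisj, sum_product, sum_product, sum_singleton,
    sum_comm, sum_singleton]

lemma sum_cells_zOfT (μ : YoungDiagram) {n : ℕ} (hμ : μ.colLen 0 ≤ n) :
    ∑ c ∈ μ.cells, zOfT n ((c.2 : ℤ) - c.1)
      = ∑ i ∈ range n, (t (μ.rowLen i + n - i) - t (n - i)) := by
  rw [μ.sum_cells_eq_sum_rows hμ fun i j => zOfT n ((j : ℤ) - i)]
  refine sum_congr rfl fun i hi => ?_
  have hin : i ≤ n := (mem_range.1 hi).le
  rw [range_eq_Ico, sum_zOfT_row n i (Nat.zero_le _), tShift_natCast_sub (by omega),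
    tShift_natCast_sub (by omega), zero_add]

/-- Equivalence of the two forms of the multivariate hook-length formula. With
`n = ℓ(lam)`, `t_0 = 0` and `z_{-n+i} = t_{i+1} - t_i`:
(a) for every box `(i,j) ∈ lam` one has `z(H(i,j)) = t_{lam_i+n-i+1} - t_{j+n-lam'_j}`
    (telescoping along the hook), and
(b) for every partition `ν ⊆ lam` with `ℓ(ν) ≤ n`,
    `z(lam/ν) = Σ_{i=1}^n (t_{lam_i+n-i+1} - t_{ν_i+n-i+1})`,
where `z(S) = Σ_{(a,b) ∈ S} z_{b-a}`. (Cells are 0-indexed.) -/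
theorem z_t_equivalence (lam : YoungDiagram) (n : ℕ) (hn : n = lam.colLen 0) :
    (∀ u ∈ lam.cells,
      (∑ v ∈ hookCells lam u, zOfT n ((v.2 : ℤ) - v.1))
        = t (lam.rowLen u.1 + n - u.1) - t (u.2 + 1 + n - lam.colLen u.2)) ∧
    (∀ ν : YoungDiagram, ν ≤ lam → ν.colLen 0 ≤ n →
      (∑ u ∈ lam.cells \ ν.cells, zOfT n ((u.2 : ℤ) - u.1))
        = ∑ i ∈ Finset.range n,
            (t (lam.rowLen i + n - i) - t (ν.rowLen i + n - i))) := by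
  constructor
  · rintro ⟨i, j⟩ hcell
    have hu : (i, j) ∈ lam := (YoungDiagram.mem_cells _).1 hcell
    have hin : i < n := hn ▸ (YoungDiagram.mem_iff_lt_colLen.1 (lam.up_left_mem le_rfl
      (Nat.zero_le j) hu))
    have hcol : lam.colLen j ≤ n := hn ▸ lam.colLen_anti 0 j (Nat.zero_le j)
    have hcorner : (((j + 1 : ℕ) : ℤ) - (i + 1 : ℕ)) = (j : ℤ) - i := by push_cast; ring
    rw [sum_hookCells lam i j fun a b => zOfT n ((b : ℤ) - a),
      sum_zOfT_row n i (YoungDiagram.mem_iff_lt_rowLen.1 hu).le,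
      sum_zOfT_col n j (YoungDiagram.mem_iff_lt_colLen.1 hu), hcorner, sub_add_sub_cancel,
      tShift_natCast_sub (by omega), tShift_natCast_sub (by omega)]
  · intro ν hν hν0
    rw [sum_sdiff_eq_sub (YoungDiagram.cells_subset_iff.2 hν), sum_cells_zOfT lam hn.ge,
      sum_cells_zOfT ν hν0, ← sum_sub_distrib]
    simp only [sub_sub_sub_cancel_right]
end
end

section
/- Let K be a field, let Z_μ(λ) ∈ K be defined for every pair of partitions μ, λ, let p_μ(λ) ∈ K be defined for all μ ⊆ λ, and let C_{ν/μ} ∈ K be defined for every pair μ ⊂ ν with |ν| = |μ| + 1. Assume: (vanishing) Z_μ(λ) = 0 whenever μ ⊄ λ; (Pieri rule) p_μ(λ) · Z_μ(λ) = Σ_{ν = μ+□, ν ⊆ λ} C_{ν/μ} · Z_ν(λ) for all μ ⊆ λ with μ ≠ λ, where the sum is over partitions ν ⊆ λ obtained from μ by adding one box; and p_μ(λ) ≠ 0 for all μ ⊆ λ with μ ≠ λ. Then for every pair μ ⊆ λ, Z_λ(λ) · Σ_{T ∈ SYT(λ/μ)} Π_{k=1}^{|λ/μ|} C_{T[=k]}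 / p_{T^{-1}[<k]}(λ) = Z_μ(λ), where for T ∈ SYT(λ/μ), T^{-1}[<k] is the partition whose complement in λ is occupied by entries ≥ k (with T^{-1}[<1] = μ), and T[=k] denotes the one-box skew shape T^{-1}[<k+1] / T^{-1}[<k]. -/
open scoped Classical

noncomputable section

/-- The cells of the skew shape `lam / μ`. -/
def skewCells (μ lam : YoungDiagram) : Finset (ℕ × ℕ) := lam.cells \ μ.cells

/-- A standard Young tableau of skew shape `lam / μ`: a bijection from the cells of the
skew shape onto `{1, …, |lam/μ|}`, weakly increasing along rows and columns
(hence strictly increasing, being injective), extended by `0` outside the skew shape. -/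
structure SkewSYT (μ lam : YoungDiagram) where
  toFun : ℕ × ℕ → ℕ
  zero_outside : ∀ u, u ∉ skewCells μ lam → toFun u = 0
  bijOn : Set.BijOn toFun (skewCells μ lam : Set (ℕ × ℕ)) (Set.Icc 1 (skewCells μ lam).card)
  mono : ∀ u v : ℕ × ℕ, u ∈ skewCells μ lam → v ∈ skewCells μ lam →
    u.1 ≤ v.1 → u.2 ≤ v.2 → toFun u ≤ toFun v

/-- The cells of the partition `T⁻¹[< k]`: the cells of `μ` together with the cells of the
skew shape carrying entries `< k` (so its complement in `lam` is occupied by entries `≥ k`). -/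
def ltCells (μ lam : YoungDiagram) (T : SkewSYT μ lam) (k : ℕ) : Finset (ℕ × ℕ) :=
  μ.cells ∪ (skewCells μ lam).filter (fun u => T.toFun u < k)

/-- The number of cells of `S` in row `i` (for `S` the cell set of a partition `ν`,
this is the part `ν_{i+1}`, rows being 0-indexed). -/
def rowCt (S : Finset (ℕ × ℕ)) (i : ℕ) : ℕ := (S.filter (fun u => u.1 = i)).card

/-!
Induction on `|lam / μ|`. The entry `1` of `T ∈ SYT(lam/μ)` sits in a box `ν / μ` with
`ν = μ + □ ⊆ lam`, and deleting it (lowering all other entries by one) is a bijection from the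
tableaux with first box `ν / μ` onto `SYT(lam/ν)`, under which the summand of `T` is
`C_{ν/μ} / p_μ` times the summand of its image. Hence
`p_μ · Z_lam · Σ_{SYT(lam/μ)} = Σ_ν C_{ν/μ} · Z_lam · Σ_{SYT(lam/ν)} = Σ_ν C_{ν/μ} · Z_ν = p_μ · Z_μ`
by induction and the Pieri rule, and `p_μ ≠ 0` cancels.
-/

open Finset in
theorem prod_Icc_one_add_one {M : Type*} [CommMonoid M] (f : ℕ → M) (n : ℕ) :
    ∏ k ∈ Icc 1 (n + 1), f k = f 1 * ∏ k ∈ Icc 1 n, f (k + 1) := by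
  rw [Icc_eq_cons_Ioc (by omega), prod_cons, ← Icc_add_one_left_eq_Ioc, ← image_add_right_Icc,
    prod_image (by simp)]

section BijOnIcc

open Set

variable {α : Type*} {s t : Finset α}

theorem bijOn_sub_one_filter {f : α → ℕ} (hf : BijOn f s (Icc 1 s.card)) :
    BijOn (f · - 1) (s.filter (2 ≤ f ·)) (Icc 1 (s.card - 1)) := by
  refine ⟨fun a ha => ?_, fun a ha b hb hab => ?_, fun m ⟨hm1, hm2⟩ => ?_⟩
  · obtain ⟨ha, h2⟩ := Finset.mem_filter.1 ha
    have := (hf.mapsTo ha).2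
    simp only [mem_Icc]
    omega
  · obtain ⟨ha, ha2⟩ := Finset.mem_filter.1 ha
    obtain ⟨hb, hb2⟩ := Finset.mem_filter.1 hb
    exact hf.injOn ha hb (by simp only at hab; omega)
  · obtain ⟨a, ha, hfa⟩ := hf.surjOn (show m + 1 ∈ Icc 1 s.card from ⟨by omega, by omega⟩)
    exact ⟨a, Finset.mem_filter.2 ⟨ha, by omega⟩, by simp only [hfa]; omega⟩

theorem card_filter_two_le {f : α → ℕ} (hf : BijOn f s (Icc 1 s.card)) :
    (s.filter (2 ≤ f ·)).card = s.card - 1 := by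
  have hbij := bijOn_sub_one_filter hf
  rw [← Finset.coe_Icc] at hbij
  simpa using Finset.card_nbij _ hbij.mapsTo hbij.injOn hbij.surjOn

theorem bijOn_add_one_of_subset {g : α → ℕ} (hts : t ⊆ s) (hcard : s.card = t.card + 1)
    (hg : BijOn g t (Icc 1 t.card)) (hg0 : ∀ a ∉ t, g a = 0) :
    BijOn (g · + 1) s (Icc 1 s.card) := by
  have hsdiff : (s \ t).card = 1 := by rw [Finset.card_sdiff_of_subset hts]; omega
  refine ⟨fun a _ => ?_, fun a ha b hb hab => ?_, fun m ⟨hm1, hm2⟩ => ?_⟩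
  · simp only [mem_Icc]
    by_cases hat : a ∈ t
    · have := (hg.mapsTo hat).2
      omega
    · rw [hg0 a hat]
      omega
  · simp only [add_left_inj] at hab
    by_cases hat : a ∈ t <;> by_cases hbt : b ∈ t
    · exact hg.injOn hat hbt hab
    · have := (hg.mapsTo hat).1; rw [hg0 b hbt] at hab; omega
    · have := (hg.mapsTo hbt).1; rw [hg0 a hat] at hab; omega
    · exact Finset.card_le_one.1 hsdiff.le a (Finset.mem_sdiff.2 ⟨ha, hat⟩) b
        (Finset.mem_sdiff.2 ⟨hb, hbt⟩)
  · rcases Nat.lt_or_ge m 2 with hm | hm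
    · obtain ⟨c, hc⟩ := Finset.card_pos.1 (by omega : 0 < (s \ t).card)
      obtain ⟨hcs, hct⟩ := Finset.mem_sdiff.1 hc
      exact ⟨c, hcs, by simp only [hg0 c hct]; omega⟩
    · obtain ⟨a, ha, hga⟩ := hg.surjOn (show m - 1 ∈ Icc 1 t.card from ⟨by omega, by omega⟩)
      exact ⟨a, hts ha, by simp only [hga]; omega⟩

end BijOnIcc

section Skew

variable {μ ν lam : YoungDiagram}

theorem skewCells_anti (h : μ ≤ ν) : skewCells ν lam ⊆ skewCells μ lam :=
  Finset.sdiff_subset_sdiff subset_rfl (YoungDiagram.cells_subset_iff.2 h)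

theorem card_skewCells_add_card (h : μ ≤ lam) :
    (skewCells μ lam).card + μ.cells.card = lam.cells.card :=
  Finset.card_sdiff_add_card_eq_card (YoungDiagram.cells_subset_iff.2 h)

theorem eq_of_skewCells_eq_empty (h : μ ≤ lam) (he : skewCells μ lam = ∅) : μ = lam :=
  le_antisymm h (YoungDiagram.cells_subset_iff.1 (Finset.sdiff_eq_empty_iff_subset.1 he))

end Skew

namespace SkewSYT

variable {μ ν lam : YoungDiagram}

@[ext]
theorem ext {T T' : SkewSYT μ lam} (h : T.toFun = T'.toFun) : T = T' := by
  cases T; cases T'; congr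

theorem toFun_mem_Icc (T : SkewSYT μ lam) {u : ℕ × ℕ} (hu : u ∈ skewCells μ lam) :
    1 ≤ T.toFun u ∧ T.toFun u ≤ (skewCells μ lam).card :=
  T.bijOn.mapsTo hu

instance : Finite (SkewSYT μ lam) :=
  Finite.of_injective
    (fun T (u : skewCells μ lam) =>
      (⟨T.toFun u, Nat.lt_succ_of_le (T.toFun_mem_Icc u.2).2⟩ : Fin ((skewCells μ lam).card + 1)))
    fun T T' h => SkewSYT.ext <| funext fun u => by
      by_cases hu : u ∈ skewCells μ lam
      · simpa using congrFun h ⟨u, hu⟩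
      · rw [T.zero_outside u hu, T'.zero_outside u hu]

instance : Fintype (SkewSYT μ lam) := Fintype.ofFinite _

instance : Unique (SkewSYT lam lam) where
  default :=
    { toFun := 0
      zero_outside := fun _ _ => rfl
      bijOn := by simp [skewCells]
      mono := by simp [skewCells] }
  uniq T := SkewSYT.ext <| funext fun u => T.zero_outside u (by simp [skewCells])

theorem ltCells_one (T : SkewSYT μ lam) : ltCells μ lam T 1 = μ.cells := by
  refine Finset.union_eq_left.2 fun u hu => ?_
  obtain ⟨hu, hlt⟩ := Finset.mem_filter.1 hu
  exact absurd hlt (by have := (T.toFun_mem_Icc hu).1; omega)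

theorem isLowerSet_ltCells (T : SkewSYT μ lam) (k : ℕ) :
    IsLowerSet (ltCells μ lam T k : Set (ℕ × ℕ)) := by
  intro a b hba ha
  simp only [Finset.mem_coe, ltCells, Finset.mem_union, Finset.mem_filter] at ha ⊢
  rcases ha with ha | ⟨ha, hTa⟩
  · exact Or.inl (μ.isLowerSet hba ha)
  · by_cases hbμ : b ∈ μ.cells
    · exact Or.inl hbμ
    · have hb : b ∈ skewCells μ lam :=
        Finset.mem_sdiff.2 ⟨lam.isLowerSet hba (Finset.mem_sdiff.1 ha).1, hbμ⟩
      exact Or.inr ⟨hb, (T.mono b a hb ha hba.1 hba.2).trans_lt hTa⟩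

def ltShape (T : SkewSYT μ lam) (k : ℕ) : YoungDiagram :=
  ⟨ltCells μ lam T k, T.isLowerSet_ltCells k⟩

theorem le_ltShape (T : SkewSYT μ lam) (k : ℕ) : μ ≤ T.ltShape k :=
  YoungDiagram.cells_subset_iff.1 Finset.subset_union_left

theorem ltShape_le (hμ : μ ≤ lam) (T : SkewSYT μ lam) (k : ℕ) : T.ltShape k ≤ lam :=
  YoungDiagram.cells_subset_iff.1 <| Finset.union_subset (YoungDiagram.cells_subset_iff.2 hμ)
    fun _ hu => (Finset.mem_sdiff.1 (Finset.mem_filter.1 hu).1).1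

theorem skewCells_ltShape (T : SkewSYT μ lam) (k : ℕ) :
    skewCells (T.ltShape k) lam = (skewCells μ lam).filter (k ≤ T.toFun ·) := by
  ext u
  simp only [ltShape, skewCells, ltCells, Finset.mem_sdiff, Finset.mem_filter, Finset.mem_union,
    ← not_lt]
  tauto

theorem card_ltShape_two (hμ : μ ≤ lam) (T : SkewSYT μ lam) (hne : (skewCells μ lam).Nonempty) :
    (T.ltShape 2).cells.card = μ.cells.card + 1 := by
  have h₁ := card_skewCells_add_card (T.ltShape_le hμ 2)
  have h₂ := card_skewCells_add_card hμ
  have h₃ := card_filter_two_le T.bijOn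
  have h₄ := hne.card_pos
  rw [skewCells_ltShape] at h₁
  omega

/-- The box containing `1` gets `1 - 1 = 0`, so this vanishes outside `lam / ν`. -/
def tail (T : SkewSYT μ lam) (h : T.ltShape 2 = ν) : SkewSYT ν lam where
  toFun u := T.toFun u - 1
  zero_outside u hu := by
    subst h
    rw [skewCells_ltShape, Finset.mem_filter] at hu
    by_cases huμ : u ∈ skewCells μ lam
    · exact Nat.sub_eq_zero_of_le (by_contra fun h₂ => hu ⟨huμ, by omega⟩)
    · rw [T.zero_outside u huμ]
  bijOn := by
    subst h
    rw [skewCells_ltShape, card_filter_two_le T.bijOn]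
    exact bijOn_sub_one_filter T.bijOn
  mono u v hu hv h₁ h₂ := by
    subst h
    rw [skewCells_ltShape] at hu hv
    exact Nat.sub_le_sub_right (T.mono u v (Finset.mem_filter.1 hu).1 (Finset.mem_filter.1 hv).1
      h₁ h₂) 1

theorem ltCells_tail (T : SkewSYT μ lam) (h : T.ltShape 2 = ν) {k : ℕ} (hk : 1 ≤ k) :
    ltCells ν lam (T.tail h) k = ltCells μ lam T (k + 1) := by
  subst h
  ext u
  simp only [ltCells, tail]
  rw [skewCells_ltShape]
  simp only [ltShape, ltCells, Finset.mem_union, Finset.mem_filter]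
  grind

/-- The box `ν / μ` gets `0 + 1 = 1`, since `T'` vanishes outside `lam / ν`. -/
def cons (hμν : μ ≤ ν) (hνlam : ν ≤ lam) (hcard : ν.cells.card = μ.cells.card + 1)
    (T' : SkewSYT ν lam) : SkewSYT μ lam where
  toFun u := if u ∈ skewCells μ lam then T'.toFun u + 1 else 0
  zero_outside _ hu := if_neg hu
  bijOn := by
    have := card_skewCells_add_card hνlam
    have := card_skewCells_add_card (hμν.trans hνlam)
    refine (bijOn_add_one_of_subset (skewCells_anti hμν) (by omega) T'.bijOn
      T'.zero_outside).congr fun u hu => (if_pos hu).symm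
  mono u v hu hv h₁ h₂ := by
    simp only [if_pos hu, if_pos hv, add_le_add_iff_right]
    by_cases huν : u ∈ skewCells ν lam
    · by_cases hvν : v ∈ skewCells ν lam
      · exact T'.mono u v huν hvν h₁ h₂
      · have hvν' : v ∈ ν.cells := by
          by_contra h
          exact hvν (Finset.mem_sdiff.2 ⟨(Finset.mem_sdiff.1 hv).1, h⟩)
        exact absurd (ν.isLowerSet (Prod.mk_le_mk.2 ⟨h₁, h₂⟩) hvν') (Finset.mem_sdiff.1 huν).2
    · rw [T'.zero_outside u huν]
      exact Nat.zero_le _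

theorem ltShape_cons (hμν : μ ≤ ν) (hνlam : ν ≤ lam) (hcard : ν.cells.card = μ.cells.card + 1)
    (T' : SkewSYT ν lam) : (cons hμν hνlam hcard T').ltShape 2 = ν := by
  refine YoungDiagram.ext (Finset.ext fun u => ?_)
  have hμν' := YoungDiagram.cells_subset_iff.2 hμν
  have hνlam' := YoungDiagram.cells_subset_iff.2 hνlam
  have := T'.zero_outside u
  have := fun hu => (T'.toFun_mem_Icc (u := u) hu).1
  simp only [ltShape, ltCells, cons, skewCells, Finset.mem_union, Finset.mem_filter,
    Finset.mem_sdiff] at *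
  grind

theorem tail_cons (hμν : μ ≤ ν) (hνlam : ν ≤ lam) (hcard : ν.cells.card = μ.cells.card + 1)
    (T' : SkewSYT ν lam) (h : (cons hμν hνlam hcard T').ltShape 2 = ν) :
    (cons hμν hνlam hcard T').tail h = T' := by
  ext u
  simp only [tail, cons]
  split_ifs with hu
  · rfl
  · rw [T'.zero_outside u fun huν => hu (skewCells_anti hμν huν)]

theorem cons_tail (T : SkewSYT μ lam) (h : T.ltShape 2 = ν) (hμν : μ ≤ ν) (hνlam : ν ≤ lam)
    (hcard : ν.cells.card = μ.cells.card + 1) : cons hμν hνlam hcard (T.tail h) = T := by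
  ext u
  simp only [tail, cons]
  split_ifs with hu
  · have := (T.toFun_mem_Icc hu).1
    omega
  · rw [T.zero_outside u hu]

variable {K : Type*} [Semifield K]

def weight (C : Finset (ℕ × ℕ) → Finset (ℕ × ℕ) → K) (p : Finset (ℕ × ℕ) → K)
    (T : SkewSYT μ lam) : K :=
  ∏ k ∈ Finset.Icc 1 (skewCells μ lam).card,
    C (ltCells μ lam T (k + 1)) (ltCells μ lam T k) / p (ltCells μ lam T k)

theorem weight_eq_mul_weight_tail (C : Finset (ℕ × ℕ) → Finset (ℕ × ℕ) → K)
    (p : Finset (ℕ × ℕ) → K) (T : SkewSYT μ lam) (hne : (skewCells μ lam).Nonempty)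
    (h : T.ltShape 2 = ν) :
    T.weight C p = C ν.cells μ.cells / p μ.cells * (T.tail h).weight C p := by
  have hcard : (skewCells μ lam).card = (skewCells ν lam).card + 1 := by
    have := hne.card_pos
    rw [← h, skewCells_ltShape, card_filter_two_le T.bijOn]
    omega
  have hν : ltCells μ lam T 2 = ν.cells := congrArg YoungDiagram.cells h
  rw [weight, weight, hcard, prod_Icc_one_add_one, ltCells_one, hν]
  congr 1
  refine Finset.prod_congr rfl fun k hk => ?_
  rw [T.ltCells_tail h (Finset.mem_Icc.1 hk).1, T.ltCells_tail h (by omega)]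

end SkewSYT

def oneBoxExtensions (lam μ : YoungDiagram) : Set YoungDiagram :=
  {ν | ν ≤ lam ∧ μ ≤ ν ∧ ν.cells.card = μ.cells.card + 1}

theorem oneBoxExtensions_finite (lam μ : YoungDiagram) : (oneBoxExtensions lam μ).Finite :=
  (lam.cells.powerset.finite_toSet.preimage fun _ _ _ _ h => YoungDiagram.ext h).subset
    fun _ hν => Finset.mem_powerset.2 (YoungDiagram.cells_subset_iff.2 hν.1)

section

open SkewSYT

variable {K : Type*} [Semifield K] {μ lam : YoungDiagram}

theorem sum_weight_eq_sum_oneBoxExtensions (C : Finset (ℕ × ℕ) → Finset (ℕ × ℕ) → K)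
    (p : Finset (ℕ × ℕ) → K) (hμ : μ ≤ lam) (hne : (skewCells μ lam).Nonempty) :
    ∑ T : SkewSYT μ lam, T.weight C p
      = ∑ ν ∈ (oneBoxExtensions_finite lam μ).toFinset,
          C ν.cells μ.cells / p μ.cells * ∑ T : SkewSYT ν lam, T.weight C p := by
  have hmaps : ∀ T ∈ (Finset.univ : Finset (SkewSYT μ lam)),
      T.ltShape 2 ∈ (oneBoxExtensions_finite lam μ).toFinset := fun T _ =>
    (Set.Finite.mem_toFinset _).2 ⟨T.ltShape_le hμ 2, T.le_ltShape 2, T.card_ltShape_two hμ hne⟩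
  rw [← Finset.sum_fiberwise_of_maps_to hmaps]
  refine Finset.sum_congr rfl fun ν hν => ?_
  obtain ⟨hνlam, hμν, hcard⟩ := (Set.Finite.mem_toFinset _).1 hν
  rw [Finset.mul_sum]
  exact Finset.sum_bij' (fun T hT => T.tail (Finset.mem_filter.1 hT).2)
    (fun T' _ => cons hμν hνlam hcard T') (fun _ _ => Finset.mem_univ _)
    (fun T' _ => Finset.mem_filter.2 ⟨Finset.mem_univ _, ltShape_cons hμν hνlam hcard T'⟩)
    (fun T _ => cons_tail T _ hμν hνlam hcard) (fun T' _ => tail_cons hμν hνlam hcard T' _)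
    (fun T _ => weight_eq_mul_weight_tail C p T hne _)

theorem mul_sum_weight_eq {Z p : Finset (ℕ × ℕ) → K} {C : Finset (ℕ × ℕ) → Finset (ℕ × ℕ) → K}
    (hpieri : ∀ μ : YoungDiagram, μ ≤ lam → μ ≠ lam →
      p μ.cells * Z μ.cells = ∑ᶠ ν ∈ oneBoxExtensions lam μ, C ν.cells μ.cells * Z ν.cells)
    (hp : ∀ μ : YoungDiagram, μ ≤ lam → μ ≠ lam → p μ.cells ≠ 0) (hμ : μ ≤ lam) :
    Z lam.cells * ∑ T : SkewSYT μ lam, T.weight C p = Z μ.cells := by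
  induction hn : (skewCells μ lam).card generalizing μ with
  | zero =>
    obtain rfl := eq_of_skewCells_eq_empty hμ (Finset.card_eq_zero.1 hn)
    simp [weight, hn]
  | succ n ih =>
    have hne : (skewCells μ lam).Nonempty := Finset.card_pos.1 (by omega)
    have hμlam : μ ≠ lam := by
      rintro rfl
      simp [skewCells] at hne
    have hpμ := hp μ hμ hμlam
    refine mul_left_cancel₀ hpμ ?_
    rw [hpieri μ hμ hμlam, finsum_mem_eq_finite_toFinset_sum _ (oneBoxExtensions_finite lam μ),
      sum_weight_eq_sum_oneBoxExtensions C p hμ hne, Finset.mul_sum, Finset.mul_sum]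
    refine Finset.sum_congr rfl fun ν hν => ?_
    obtain ⟨hνlam, hμν, hcard⟩ := (Set.Finite.mem_toFinset _).1 hν
    have hνn : (skewCells ν lam).card = n := by
      have := card_skewCells_add_card hμ
      have := card_skewCells_add_card hνlam
      omega
    rw [← ih hνlam hνn]
    field_simp

end

theorem general_skew_SYT_sum_general {K : Type} [Field K] (lam : YoungDiagram)
    (Z : Finset (ℕ × ℕ) → K) (p : Finset (ℕ × ℕ) → K)
    (C : Finset (ℕ × ℕ) → Finset (ℕ × ℕ) → K)
    (hpieri : ∀ μ : YoungDiagram, μ ≤ lam → μ ≠ lam →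
      p μ.cells * Z μ.cells
        = ∑ᶠ ν ∈ {ν : YoungDiagram |
            ν ≤ lam ∧ μ ≤ ν ∧ ν.cells.card = μ.cells.card + 1},
            C ν.cells μ.cells * Z ν.cells)
    (hp : ∀ μ : YoungDiagram, μ ≤ lam → μ ≠ lam → p μ.cells ≠ 0)
    (μ : YoungDiagram) (hml : μ ≤ lam) :
    Z lam.cells *
      ∑ᶠ T : SkewSYT μ lam, ∏ k ∈ Finset.Icc 1 (skewCells μ lam).card,
        C (ltCells μ lam T (k + 1)) (ltCells μ lam T k) / p (ltCells μ lam T k)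
    = Z μ.cells := by
  rw [finsum_eq_sum_of_fintype]
  exact mul_sum_weight_eq hpieri hp hml

/-- **General formalism for sums over skew SYTs.** Let `K` be a field, `lam` a Young diagram,
and suppose `Z`, `p`, `C` (given here as functions of the cell sets of partitions) satisfy:
(vanishing) `Z μ = 0` whenever `μ ⊄ lam`;
(Pieri rule) `p μ · Z μ = Σ_{ν = μ+□, ν ⊆ lam} C (ν,μ) · Z ν` for all `μ ⊆ lam`, `μ ≠ lam`;
and `p μ ≠ 0` for all `μ ⊆ lam`, `μ ≠ lam`. Then for every `μ ⊆ lam`: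
`Z lam · Σ_{T ∈ SYT(lam/μ)} Π_{k=1}^{|lam/μ|} C(T[=k]) / p(T⁻¹[<k]) = Z μ`,
where `T[=k]` is the one-box skew shape `T⁻¹[<k+1] / T⁻¹[<k]`. -/
theorem general_skew_SYT_sum {K : Type} [Field K] (lam : YoungDiagram)
    (Z : Finset (ℕ × ℕ) → K) (p : Finset (ℕ × ℕ) → K)
    (C : Finset (ℕ × ℕ) → Finset (ℕ × ℕ) → K)
    (hvanish : ∀ μ : YoungDiagram, ¬μ ≤ lam → Z μ.cells = 0)
    (hpieri : ∀ μ : YoungDiagram, μ ≤ lam → μ ≠ lam →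
      p μ.cells * Z μ.cells
        = ∑ᶠ ν ∈ {ν : YoungDiagram |
            ν ≤ lam ∧ μ ≤ ν ∧ ν.cells.card = μ.cells.card + 1},
            C ν.cells μ.cells * Z ν.cells)
    (hp : ∀ μ : YoungDiagram, μ ≤ lam → μ ≠ lam → p μ.cells ≠ 0)
    (μ : YoungDiagram) (hml : μ ≤ lam) :
    Z lam.cells *
      ∑ᶠ T : SkewSYT μ lam, ∏ k ∈ Finset.Icc 1 (skewCells μ lam).card,
        C (ltCells μ lam T (k + 1)) (ltCells μ lam T k) / p (ltCells μ lam T k)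
    = Z μ.cells :=
  general_skew_SYT_sum_general lam Z p C hpieri hp μ hml
end
end

section
/- Let n ≥ 1, let μ be a partition with ℓ(μ) ≤ n, let x_1, …, x_n be distinct elements of a field and a_1, a_2, … elements of the same field (or work with indeterminates in a rational function field). Then Σ_i s_{μ+ε_i}(x_1,…,x_n | a) = ( Σ_{i=1}^{n} x_i − Σ_{i=1}^{n} a_{μ_i+n−i+1} ) · s_μ(x_1,…,x_n | a), where ε_i is the i-th standard unit vector and the sum on the left is over those 1 ≤ i ≤ n for which μ + ε_i is again a partition. -/
open scoped Classical

noncomputable section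

/-- The Vandermonde product `Π_{1 ≤ i < j ≤ n} (x i - x j)` (variables indexed from 1). -/
def vdm {K : Type} [Field K] (n : ℕ) (x : ℕ → K) : K :=
  ∏ p ∈ (Finset.Icc 1 n ×ˢ Finset.Icc 1 n).filter (fun p => p.1 < p.2), (x p.1 - x p.2)

/-- The factorial Schur polynomial
`s_μ(x_1,…,x_n | a) = det[ (x_i - a_1)⋯(x_i - a_{μ_j+n-j}) ]_{i,j=1}^n / Π_{i<j}(x_i - x_j)`.
Here `μ : ℕ → ℕ` is the 0-indexed part sequence (`μ k` is the `(k+1)`-st part), and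
`x`, `a` are indexed from 1; for `i j : Fin n` the 1-indexed quantity `μ_j + n - j` reads
`μ j + (n - 1 - j)`. -/
def facSchur {K : Type} [Field K] (n : ℕ) (μ : ℕ → ℕ) (x a : ℕ → K) : K :=
  Matrix.det (Matrix.of fun i j : Fin n =>
      ∏ r ∈ Finset.Icc 1 (μ (j : ℕ) + (n - 1 - (j : ℕ))), (x ((i : ℕ) + 1) - a r))
    / vdm n x

/-! Raising the part `μ_j` multiplies column `j` of the numerator matrix entrywise by
`x_i - a_{c_j + 1}`, where `c_j = μ_j + n - j` is the column degree. By linearity in that column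
the `a`-part contributes `-a_{c_j + 1} · det`, while the `x`-parts sum over `j` to `(Σ x_i) · det`,
since every permutation term picks up exactly one factor `x_{σ j}` from the scaled column.
Raisings that do not give a partition produce two equal columns, so they may be added to the sum
at no cost, and the identity holds for all `n` raisings of an arbitrary sequence. -/

open Finset

namespace Matrix

variable {R ι : Type*} [CommRing R] [Fintype ι] [DecidableEq ι]

theorem sum_det_updateCol_mul (N : Matrix ι ι R) (d : ι → R) :
    ∑ j, (N.updateCol j fun i => d i * N i j).det = (∑ i, d i) * N.det := by
  have hterm (σ : Equiv.Perm ι) (j : ι) :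
      ∏ i, (N.updateCol j fun i => d i * N i j) (σ i) i = d (σ j) * ∏ i, N (σ i) i := by
    have hentry (i : ι) : (N.updateCol j fun i => d i * N i j) (σ i) i
        = (if i = j then d (σ i) else 1) * N (σ i) i := by
      by_cases h : i = j
      · subst h; simp
      · simp [h]
    simp only [hentry, prod_mul_distrib, prod_ite_eq', mem_univ, if_true]
  simp only [det_apply, hterm]
  rw [Finset.sum_comm, mul_sum]
  refine sum_congr rfl fun σ _ => ?_
  rw [← smul_sum, ← sum_mul, Equiv.sum_comp σ d, mul_smul_comm]

end Matrix

section FactorialMatrix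

variable {K ι : Type*} [CommRing K] [DecidableEq ι]

def facMatrix (c : ι → ℕ) (x : ι → K) (a : ℕ → K) : Matrix ι ι K :=
  Matrix.of fun i j => ∏ r ∈ Icc 1 (c j), (x i - a r)

theorem facMatrix_update_succ (c : ι → ℕ) (x : ι → K) (a : ℕ → K) (j : ι) :
    facMatrix (Function.update c j (c j + 1)) x a
      = (facMatrix c x a).updateCol j fun i => (x i - a (c j + 1)) * facMatrix c x a i j := by
  ext i k
  by_cases h : k = j
  · subst h
    simp [facMatrix, prod_Icc_succ_top, mul_comm]
  · simp [facMatrix, h]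

variable [Fintype ι]

theorem det_facMatrix_update_succ (c : ι → ℕ) (x : ι → K) (a : ℕ → K) (j : ι) :
    (facMatrix (Function.update c j (c j + 1)) x a).det
      = ((facMatrix c x a).updateCol j fun i => x i * facMatrix c x a i j).det
        - a (c j + 1) * (facMatrix c x a).det := by
  have hcol : (fun i => (x i - a (c j + 1)) * facMatrix c x a i j)
      = (fun i => x i * facMatrix c x a i j) + (-a (c j + 1)) • fun i => facMatrix c x a i j := by
    funext i; simp only [Pi.add_apply, Pi.smul_apply, smul_eq_mul]; ring
  rw [facMatrix_update_succ, hcol, Matrix.det_updateCol_add, Matrix.det_updateCol_smul,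
    Matrix.updateCol_eq_self]
  ring

theorem sum_det_facMatrix_update_succ (c : ι → ℕ) (x : ι → K) (a : ℕ → K) :
    ∑ j, (facMatrix (Function.update c j (c j + 1)) x a).det
      = (∑ i, x i - ∑ j, a (c j + 1)) * (facMatrix c x a).det := by
  simp only [det_facMatrix_update_succ, sum_sub_distrib, Matrix.sum_det_updateCol_mul, sub_mul,
    sum_mul]

theorem det_facMatrix_eq_zero {c : ι → ℕ} (x : ι → K) (a : ℕ → K) {i j : ι} (hij : i ≠ j)
    (hc : c i = c j) : (facMatrix c x a).det = 0 :=
  Matrix.det_zero_of_column_eq hij fun k => by simp [facMatrix, hc]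

end FactorialMatrix

section FacSchur

variable {K : Type} [Field K]

theorem facSchur_eq_det_facMatrix (n : ℕ) (μ : ℕ → ℕ) (x a : ℕ → K) :
    facSchur n μ x a
      = (facMatrix (fun j : Fin n => μ j + (n - 1 - j)) (fun i : Fin n => x (i + 1)) a).det
        / vdm n x :=
  rfl

theorem facSchur_update_succ (n : ℕ) (μ : ℕ → ℕ) (x a : ℕ → K) (j : Fin n) :
    facSchur n (Function.update μ j (μ j + 1)) x a
      = (facMatrix (Function.update (fun j : Fin n => μ j + (n - 1 - j)) j
          (μ j + (n - 1 - j) + 1)) (fun i : Fin n => x (i + 1)) a).det / vdm n x := by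
  rw [facSchur_eq_det_facMatrix]
  congr 3
  funext k
  by_cases h : k = j
  · subst h; simp only [Function.update_self]; omega
  · simp [h, Function.update_of_ne (Fin.val_ne_of_ne h)]

theorem sum_facSchur_update_succ (n : ℕ) (μ : ℕ → ℕ) (x a : ℕ → K) :
    ∑ i ∈ range n, facSchur n (Function.update μ i (μ i + 1)) x a
      = ((∑ i ∈ Icc 1 n, x i) - ∑ i ∈ range n, a (μ i + n - i)) * facSchur n μ x a := by
  have hx : ∑ i : Fin n, x (i + 1) = ∑ i ∈ Icc 1 n, x i := by
    rw [Fin.sum_univ_eq_sum_range (fun i => x (i + 1)), ← Finset.Ico_add_one_right_eq_Icc,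
      sum_Ico_eq_sum_range]
    simp [add_comm]
  have ha : ∑ j : Fin n, a (μ j + (n - 1 - j) + 1) = ∑ i ∈ range n, a (μ i + n - i) := by
    rw [Fin.sum_univ_eq_sum_range (fun i => a (μ i + (n - 1 - i) + 1))]
    refine sum_congr rfl fun i hi => ?_
    have := mem_range.mp hi
    congr 1
    omega
  rw [← Fin.sum_univ_eq_sum_range (fun i => facSchur n (Function.update μ i (μ i + 1)) x a)]
  simp only [facSchur_update_succ]
  rw [← sum_div, sum_det_facMatrix_update_succ, hx, ha, facSchur_eq_det_facMatrix, mul_div_assoc]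

/-- Columns `i - 1` and `i` of the numerator coincide. -/
theorem facSchur_update_succ_eq_zero {n i : ℕ} (μ : ℕ → ℕ) (x a : ℕ → K) (hi : i < n)
    (hi0 : i ≠ 0) (hμ : μ i = μ (i - 1)) :
    facSchur n (Function.update μ i (μ i + 1)) x a = 0 := by
  rw [facSchur_eq_det_facMatrix, det_facMatrix_eq_zero _ _
    (i := ⟨i - 1, by omega⟩) (j := ⟨i, hi⟩) (Fin.ne_of_val_ne (show i - 1 ≠ i by omega)), zero_div]
  simp only [Fin.val_mk, Function.update_self, Function.update_of_ne (show i - 1 ≠ i by omega)]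
  omega

end FacSchur

theorem facSchur_pieri_general {K : Type} [Field K] (n : ℕ)
    (μ : YoungDiagram) (x a : ℕ → K) :
    (∑ i ∈ (Finset.range n).filter
        (fun i => i = 0 ∨ μ.rowLen i < μ.rowLen (i - 1)),
        facSchur n (Function.update (fun k => μ.rowLen k) i (μ.rowLen i + 1)) x a)
    = ((∑ i ∈ Finset.Icc 1 n, x i) - ∑ i ∈ Finset.range n, a (μ.rowLen i + n - i)) *
        facSchur n (fun k => μ.rowLen k) x a := by
  rw [← sum_facSchur_update_succ]
  refine sum_subset (filter_subset _ _) fun i hi hnot => ?_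
  simp only [mem_filter, not_and, not_or, not_lt] at hnot
  obtain ⟨hi0, hle⟩ := hnot hi
  exact facSchur_update_succ_eq_zero _ x a (mem_range.mp hi) hi0
    (le_antisymm (μ.rowLen_anti _ _ (Nat.sub_le i 1)) hle)

/-- **Pieri rule for factorial Schur polynomials.** For a partition `μ` with `ℓ(μ) ≤ n`,
pairwise distinct `x_1, …, x_n` in a field, and shifts `a`:
`Σ_i s_{μ+ε_i}(x | a) = (Σ_{i=1}^n x_i - Σ_{i=1}^n a_{μ_i+n-i+1}) · s_μ(x | a)`,
the left sum being over those `1 ≤ i ≤ n` for which `μ + ε_i` is again a partition. -/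
theorem facSchur_pieri {K : Type} [Field K] (n : ℕ) (hn : 1 ≤ n)
    (μ : YoungDiagram) (hl : μ.colLen 0 ≤ n) (x a : ℕ → K)
    (hx : ∀ i j : ℕ, 1 ≤ i → i ≤ n → 1 ≤ j → j ≤ n → i ≠ j → x i ≠ x j) :
    (∑ i ∈ (Finset.range n).filter
        (fun i => i = 0 ∨ μ.rowLen i < μ.rowLen (i - 1)),
        facSchur n (Function.update (fun k => μ.rowLen k) i (μ.rowLen i + 1)) x a)
    = ((∑ i ∈ Finset.Icc 1 n, x i) - ∑ i ∈ Finset.range n, a (μ.rowLen i + n - i)) *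
        facSchur n (fun k => μ.rowLen k) x a :=
  facSchur_pieri_general n μ x a
end
end

section
/- Let μ be a partition with ℓ(μ) ≤ n, let m = (m_1, …, m_n) be a weakly increasing sequence of positive integers, and let x_1, x_2, … and b_1, b_2, … be indeterminates. Define P_{i,j} := Σ_{r=0}^{μ_i+j−i} (−1)^r e_r(b_1,…,b_{μ_i+m_i−i}) · h_{μ_i+j−i−r}(x_1,…,x_{m_i}) for 1 ≤ i,j ≤ n (with P_{i,j} = 0 when μ_i + j − i < 0). Then det[ P_{i,j} ]_{i,j=1}^{n} = Σ_{T ∈ SSYT(μ; m)} Π_{(i,j) ∈ μ} ( x_{T(i,j)} − b_{T(i,j)+j−i} ), the sum over all flagged semistandard Young tableaux of shape μ with flag m. -/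
open scoped Classical

noncomputable section

/-- The elementary symmetric polynomial `e_r(b_1, …, b_c)` (variables indexed from 1). -/
def epoly {R : Type} [CommRing R] (r c : ℕ) (b : ℕ → R) : R :=
  ∑ S ∈ (Finset.Icc 1 c).powersetCard r, ∏ i ∈ S, b i

/-- The complete homogeneous symmetric polynomial `h_k(x_1, …, x_m)`
(variables indexed from 1). -/
def hpoly {R : Type} [CommRing R] (k m : ℕ) (x : ℕ → R) : R :=
  ∑ α ∈ Finset.Nat.antidiagonalTuple m k, ∏ i : Fin m, x ((i : ℕ) + 1) ^ α i

/-- The matrix entry `P_{i,j}^{μ,m}(x | b) = Σ_{r=0}^{μ_i+j-i} (-1)^r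
e_r(b_1,…,b_{μ_i+m_i-i}) h_{μ_i+j-i-r}(x_1,…,x_{m_i})`, equal to `0` when `μ_i + j - i < 0`
(indices `i`, `j` 1-indexed in the mathematics, matrix indices `i j : Fin n` 0-indexed,
so `μ_i + j - i` reads `μ.rowLen i + j - i`). -/
def Pmat {R : Type} [CommRing R] (n : ℕ) (μ : YoungDiagram) (m : ℕ → ℕ)
    (x b : ℕ → R) (i j : Fin n) : R :=
  if μ.rowLen (i : ℕ) + (j : ℕ) < (i : ℕ) then 0
  else
    ∑ r ∈ Finset.range (μ.rowLen (i : ℕ) + (j : ℕ) - (i : ℕ) + 1),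
      (-1) ^ r * epoly r (μ.rowLen (i : ℕ) + m (i : ℕ) - ((i : ℕ) + 1)) b *
        hpoly (μ.rowLen (i : ℕ) + (j : ℕ) - (i : ℕ) - r) (m (i : ℕ)) x

/-- The polynomial ring `ℚ[x_0, x_1, …; b_0, b_1, …]`. -/
abbrev R6 : Type := MvPolynomial (ℕ ⊕ ℕ) ℚ

/-- The indeterminates `x i`. -/
def xv : ℕ → R6 := fun i => MvPolynomial.X (Sum.inl i)

/-- The indeterminates `b c`. -/
def bv : ℕ → R6 := fun c => MvPolynomial.X (Sum.inr c)

/-!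
The `i`-th row of the matrix depends only on the length `μ_i`, the flag `m_i` and the index `i`,
and its entries satisfy the Pascal-type recursion
`P(μ_i, m_i) = P(μ_i, m_i - 1) + (x_{m_i} - b_{μ_i + m_i - i}) P(μ_i - 1, m_i)`,
where lowering `μ_i` by one gives the entry of row `i + 1` with length `μ_i`.
Take the last row `r` among the top rows of maximal length and the first row `p ≤ r` with
`m_p = m_r`. If `p < r`, subtracting a multiple of row `p + 1` from row `p` lowers `m_p` by one,
which leaves the tableaux unchanged since column strictness already forces row `p` below `m_p`.
If `p = r`, multilinearity in row `r` splits the determinant as the flagged tableaux split according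
to whether the corner `(r, μ_r)` holds the largest value `m_r` allowed: removing that corner
produces the factor `x_{m_r} - b_{m_r + μ_r - r}`. Induction on `n + |μ| + Σ m_i`.
-/

open Finset Function

namespace Matrix

variable {R : Type*} [CommRing R]

theorem det_eq_add_mul_det_of_row_eq {ι : Type*} [Fintype ι] [DecidableEq ι]
    {A B C : Matrix ι ι R} {r : ι} {F : R} (hB : ∀ i ≠ r, B i = A i)
    (hC : ∀ i ≠ r, C i = A i)
    (hr : A r = B r + F • C r) : A.det = B.det + F * C.det := by
  have hA : A = B.updateRow r (B r + F • C r) := by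
    funext i
    by_cases hi : i = r
    · subst hi; rw [updateRow_self, hr]
    · rw [updateRow_ne hi, hB i hi]
  have hC' : B.updateRow r (C r) = C := by
    funext i
    by_cases hi : i = r
    · subst hi; rw [updateRow_self]
    · rw [updateRow_ne hi, hB i hi, hC i hi]
  rw [hA, det_updateRow_add, det_updateRow_smul, updateRow_eq_self, hC']

theorem det_eq_of_row_eq_add_smul_row {ι : Type*} [Fintype ι] [DecidableEq ι]
    {A B : Matrix ι ι R} {r s : ι} (hrs : r ≠ s) {F : R} (hB : ∀ i ≠ r, B i = A i)
    (hr : A r = B r + F • B s) : A.det = B.det := by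
  have hA : A = B.updateRow r (B r + F • B s) := by
    funext i
    by_cases hi : i = r
    · subst hi; rw [updateRow_self, hr]
    · rw [updateRow_ne hi, hB i hi]
  rw [hA, det_updateRow_add_smul_self B hrs]

theorem det_succ_eq_of_last_row_eq_single {n : ℕ} {A : Matrix (Fin (n + 1)) (Fin (n + 1)) R}
    (h : A (Fin.last n) = Pi.single (Fin.last n) 1) :
    A.det = (A.submatrix Fin.castSucc Fin.castSucc).det := by
  rw [det_succ_row A (Fin.last n), Fintype.sum_eq_single (Fin.last n)]
  · simp [h, ← two_mul, pow_mul]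
  · intro j hj
    simp [h, hj]

end Matrix

namespace YoungDiagram

theorem rowLen_eq_of_forall_mem_iff {μ : YoungDiagram} {i v : ℕ}
    (h : ∀ j, (i, j) ∈ μ ↔ j < v) : μ.rowLen i = v :=
  le_antisymm (not_lt.1 fun hv => lt_irrefl v ((h v).1 (mem_iff_lt_rowLen.2 hv)))
    (not_lt.1 fun hv => lt_irrefl _ (mem_iff_lt_rowLen.1 ((h _).2 hv)))

theorem eq_bot_of_colLen_zero {μ : YoungDiagram} (h : μ.colLen 0 = 0) : μ = ⊥ := by
  ext ⟨i, j⟩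
  simp only [mem_cells, cells_bot, Finset.notMem_empty, iff_false]
  intro hij
  have := mem_iff_lt_colLen.1 (μ.up_left_mem (Nat.zero_le i) (Nat.zero_le j) hij)
  omega

theorem rowLen_eq_succ_of_mem_of_notMem {μ : YoungDiagram} {i j : ℕ} (hc : (i, j) ∈ μ)
    (hr : (i, j + 1) ∉ μ) : μ.rowLen i = j + 1 :=
  le_antisymm (not_lt.1 fun h => hr (mem_iff_lt_rowLen.2 h)) (mem_iff_lt_rowLen.1 hc)

theorem colLen_zero_le_of_rowLen_eq_zero {μ : YoungDiagram} {n : ℕ} (h : μ.rowLen n = 0) :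
    μ.colLen 0 ≤ n :=
  not_lt.1 fun hn => by
    have := mem_iff_lt_rowLen.1 (mem_iff_lt_colLen.2 hn)
    omega

theorem exists_top_block (μ : YoungDiagram) (h : (0, 0) ∈ μ) :
    ∃ r k, (r, k) ∈ μ ∧ (r + 1, k) ∉ μ ∧ (r, k + 1) ∉ μ ∧ ∀ i ≤ r, μ.rowLen i = k + 1 := by
  obtain ⟨k, hk⟩ := Nat.exists_eq_add_one_of_ne_zero (mem_iff_lt_rowLen.1 h).ne'
  have hk0 : (0, k) ∈ μ := mem_iff_lt_rowLen.2 (by omega)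
  obtain ⟨r, hr⟩ := Nat.exists_eq_add_one_of_ne_zero (mem_iff_lt_colLen.1 hk0).ne'
  have hblock (i : ℕ) (hi : i ≤ r) : μ.rowLen i = k + 1 := by
    have := mem_iff_lt_rowLen.1 (mem_iff_lt_colLen.2 (show i < μ.colLen k by omega))
    have := μ.rowLen_anti 0 i (Nat.zero_le i)
    omega
  refine ⟨r, k, ?_, ?_, ?_, hblock⟩
  · rw [mem_iff_lt_rowLen, hblock r le_rfl]
    omega
  · rw [mem_iff_lt_colLen, hr]
    omega
  · rw [mem_iff_lt_rowLen, hblock r le_rfl]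
    omega

def eraseCorner (μ : YoungDiagram) (i j : ℕ) (hd : (i + 1, j) ∉ μ) (hr : (i, j + 1) ∉ μ) :
    YoungDiagram where
  cells := μ.cells.erase (i, j)
  isLowerSet := by
    rintro a c hca ha
    simp only [Finset.coe_erase, Set.mem_sdiff, Finset.mem_coe, mem_cells,
      Set.mem_singleton_iff] at ha ⊢
    refine ⟨μ.isLowerSet hca ha.1, ?_⟩
    rintro rfl
    obtain ⟨h1, h2⟩ := hca
    rcases h1.lt_or_eq with h1 | h1
    · exact hd (μ.up_left_mem h1 h2 ha.1)
    · exact hr (μ.up_left_mem h1.le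
        (lt_of_le_of_ne h2 fun h => ha.2 (Prod.ext h1.symm h.symm)) ha.1)

section eraseCorner

variable {μ : YoungDiagram} {i j : ℕ} {hd : (i + 1, j) ∉ μ} {hr : (i, j + 1) ∉ μ}

theorem mem_eraseCorner {u : ℕ × ℕ} :
    u ∈ μ.eraseCorner i j hd hr ↔ u ≠ (i, j) ∧ u ∈ μ := by
  rw [← mem_cells, ← mem_cells (μ := μ)]
  exact Finset.mem_erase

theorem eraseCorner_le : μ.eraseCorner i j hd hr ≤ μ :=
  fun _ hu => (mem_eraseCorner.1 hu).2

theorem card_cells_eraseCorner (hc : (i, j) ∈ μ) :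
    (μ.eraseCorner i j hd hr).cells.card + 1 = μ.cells.card :=
  Finset.card_erase_add_one ((mem_cells _).2 hc)

theorem rowLen_eraseCorner (hc : (i, j) ∈ μ) :
    (μ.eraseCorner i j hd hr).rowLen = Function.update μ.rowLen i j := by
  have hlen := rowLen_eq_succ_of_mem_of_notMem hc hr
  funext i'
  refine rowLen_eq_of_forall_mem_iff fun j' => ?_
  rw [mem_eraseCorner, mem_iff_lt_rowLen]
  by_cases hi : i' = i
  · subst hi
    rw [Function.update_self, hlen, Ne, Prod.mk.injEq]
    omega
  · rw [Function.update_of_ne hi]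
    exact ⟨And.right, fun h => ⟨fun he => hi (Prod.ext_iff.1 he).1, h⟩⟩

theorem colLen_eraseCorner_le (j' : ℕ) : (μ.eraseCorner i j hd hr).colLen j' ≤ μ.colLen j' :=
  not_lt.1 fun h => lt_irrefl _
    (mem_iff_lt_colLen.1 (eraseCorner_le (mem_iff_lt_colLen.2 h)))

end eraseCorner

end YoungDiagram

namespace SemistandardYoungTableau

variable {μ : YoungDiagram}

theorem le_apply_of_mem (T : SemistandardYoungTableau μ) {i j : ℕ} (h : (i, j) ∈ μ) :
    i ≤ T i j := by
  induction i with
  | zero => exact Nat.zero_le _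
  | succ i ih =>
    exact (ih (μ.up_left_mem i.le_succ le_rfl h)).trans_lt (T.col_strict (Nat.lt_add_one i) h)

def restrict (T : SemistandardYoungTableau μ) {ν : YoungDiagram} (hν : ν ≤ μ) :
    SemistandardYoungTableau ν where
  entry i j := if (i, j) ∈ ν then T i j else 0
  row_weak' hj hcell := by
    rw [if_pos hcell, if_pos (ν.up_left_mem le_rfl hj.le hcell)]
    exact T.row_weak hj (hν hcell)
  col_strict' hi hcell := by
    rw [if_pos hcell, if_pos (ν.up_left_mem hi.le le_rfl hcell)]
    exact T.col_strict hi (hν hcell)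
  zeros' hcell := if_neg hcell

theorem restrict_apply_of_mem (T : SemistandardYoungTableau μ) {ν : YoungDiagram}
    (hν : ν ≤ μ) {i j : ℕ} (h : (i, j) ∈ ν) : T.restrict hν i j = T i j :=
  if_pos h

section insertCorner

variable {i j : ℕ} {hd : (i + 1, j) ∉ μ} {hr : (i, j + 1) ∉ μ}

def insertCorner (T : SemistandardYoungTableau (μ.eraseCorner i j hd hr)) (hc : (i, j) ∈ μ)
    (v : ℕ) (hrow : ∀ j' < j, T i j' ≤ v) (hcol : ∀ i' < i, T i' j < v) :
    SemistandardYoungTableau μ where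
  entry i' j' := if (i', j') = (i, j) then v else T i' j'
  row_weak' {i' j1 j2} hj hcell := by
    by_cases h2 : (i', j2) = (i, j)
    · obtain ⟨rfl, rfl⟩ := Prod.ext_iff.1 h2
      rw [if_neg (by simp; omega), if_pos h2]
      exact hrow j1 hj
    · have h1 : (i', j1) ≠ (i, j) := by
        rintro ⟨⟩
        exact hr (μ.up_left_mem le_rfl hj hcell)
      rw [if_neg h1, if_neg h2]
      exact T.row_weak hj (YoungDiagram.mem_eraseCorner.2 ⟨h2, hcell⟩)
  col_strict' {i1 i2 j'} hi hcell := by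
    by_cases h2 : (i2, j') = (i, j)
    · obtain ⟨rfl, rfl⟩ := Prod.ext_iff.1 h2
      rw [if_neg (by simp; omega), if_pos h2]
      exact hcol i1 hi
    · have h1 : (i1, j') ≠ (i, j) := by
        rintro ⟨⟩
        exact hd (μ.up_left_mem hi le_rfl hcell)
      rw [if_neg h1, if_neg h2]
      exact T.col_strict hi (YoungDiagram.mem_eraseCorner.2 ⟨h2, hcell⟩)
  zeros' {i' j'} hcell := by
    have h : (i', j') ≠ (i, j) := by rintro ⟨⟩; exact hcell hc
    rw [if_neg h]
    exact T.zeros fun h' => hcell (YoungDiagram.eraseCorner_le h')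

theorem insertCorner_apply (T : SemistandardYoungTableau (μ.eraseCorner i j hd hr))
    (hc : (i, j) ∈ μ) (v : ℕ) (hrow : ∀ j' < j, T i j' ≤ v) (hcol : ∀ i' < i, T i' j < v)
    (i' j' : ℕ) :
    T.insertCorner hc v hrow hcol i' j' = if (i', j') = (i, j) then v else T i' j' :=
  rfl

theorem restrict_insertCorner (T : SemistandardYoungTableau (μ.eraseCorner i j hd hr))
    (hc : (i, j) ∈ μ) (v : ℕ) (hrow : ∀ j' < j, T i j' ≤ v) (hcol : ∀ i' < i, T i' j < v) :
    (T.insertCorner hc v hrow hcol).restrict YoungDiagram.eraseCorner_le = T := by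
  ext i' j'
  by_cases h : (i', j') ∈ μ.eraseCorner i j hd hr
  · rw [restrict_apply_of_mem _ _ h, insertCorner_apply,
      if_neg (YoungDiagram.mem_eraseCorner.1 h).1]
  · rw [(restrict _ _).zeros h, T.zeros h]

end insertCorner

end SemistandardYoungTableau

namespace FlaggedJacobiTrudi

variable {R : Type} [CommRing R] (x b : ℕ → R)

theorem epoly_zero (c : ℕ) : epoly 0 c b = 1 := by
  simp [epoly]

theorem epoly_of_lt {r c : ℕ} (h : c < r) : epoly r c b = 0 := by
  rw [epoly, powersetCard_eq_empty.2 (by simpa using h), sum_empty]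

theorem epoly_succ_succ (r c : ℕ) :
    epoly (r + 1) (c + 1) b = epoly (r + 1) c b + b (c + 1) * epoly r c b := by
  have hIcc : Icc 1 (c + 1) = insert (c + 1) (Icc 1 c) := by ext; simp; omega
  simp only [epoly, ← esymm_map_val, hIcc, insert_val_of_notMem (by simp : c + 1 ∉ Icc 1 c),
    Multiset.map_cons, Multiset.esymm, Multiset.powersetCard_cons, Multiset.map_add,
    Multiset.sum_add, Multiset.map_map]
  simp [Multiset.sum_map_mul_left]

theorem epoly_update_zero (r c : ℕ) (a : R) : epoly r c (update b 0 a) = epoly r c b := by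
  refine sum_congr rfl fun S hS => prod_congr rfl fun i hi => update_of_ne ?_ _ _
  have := (mem_powersetCard.1 hS).1 hi
  simp only [mem_Icc] at this
  omega

theorem hpoly_zero (m : ℕ) : hpoly 0 m x = 1 := by
  simp [hpoly, Finset.Nat.antidiagonalTuple_zero_right]

theorem hpoly_succ_zero (k : ℕ) : hpoly (k + 1) 0 x = 0 := by
  simp [hpoly, Finset.Nat.antidiagonalTuple_zero_succ]

theorem hpoly_succ_vars (k m : ℕ) :
    hpoly k (m + 1) x = ∑ d ∈ range (k + 1), x (m + 1) ^ d * hpoly (k - d) m x := by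
  simp only [hpoly, mul_sum]
  rw [sum_sigma']
  refine sum_nbij' (fun α => (⟨α (Fin.last m), Fin.init α⟩ : (_ : ℕ) × (Fin m → ℕ)))
    (fun p => Fin.snoc p.2 p.1) ?_ ?_ ?_ ?_ ?_
  · intro α hα
    rw [Finset.Nat.mem_antidiagonalTuple, Fin.sum_univ_castSucc] at hα
    simp only [mem_sigma, mem_range, Finset.Nat.mem_antidiagonalTuple, Fin.init]
    omega
  · rintro ⟨d, β⟩ hp
    simp only [mem_sigma, mem_range, Finset.Nat.mem_antidiagonalTuple] at hp
    rw [Finset.Nat.mem_antidiagonalTuple, Fin.sum_univ_castSucc]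
    simp only [Fin.snoc_castSucc, Fin.snoc_last]
    omega
  · intro α _
    exact Fin.snoc_init_self α
  · rintro ⟨d, β⟩ _
    simp only [Fin.snoc_last, Fin.init_snoc]
  · intro α _
    rw [Fin.prod_univ_castSucc]
    simp only [Fin.val_last, Fin.val_castSucc, Fin.init]
    ring

theorem hpoly_succ_succ (k m : ℕ) :
    hpoly (k + 1) (m + 1) x = hpoly (k + 1) m x + x (m + 1) * hpoly k (m + 1) x := by
  rw [hpoly_succ_vars x (k + 1), sum_range_succ', hpoly_succ_vars x k, mul_sum]
  simp only [pow_zero, one_mul, Nat.sub_zero, pow_succ, Nat.add_sub_add_right]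
  rw [add_comm]
  congr 1
  exact sum_congr rfl fun d _ => by ring

def superH (k w m : ℕ) : R :=
  ∑ r ∈ range (k + 1), (-1) ^ r * epoly r w b * hpoly (k - r) m x

theorem superH_zero (w m : ℕ) : superH x b 0 w m = 1 := by
  simp [superH, epoly_zero, hpoly_zero]

theorem superH_zero_vars (k w : ℕ) : superH x b k w 0 = (-1) ^ k * epoly k w b := by
  rw [superH, sum_eq_single_of_mem k (self_mem_range_succ k)]
  · rw [Nat.sub_self, hpoly_zero, mul_one]
  · intro r hr hrk
    obtain ⟨d, hd⟩ : ∃ d, k - r = d + 1 := ⟨k - r - 1, by simp at hr; omega⟩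
    rw [hd, hpoly_succ_zero, mul_zero]

theorem superH_succ_left_succ (k w m : ℕ) :
    superH x b (k + 1) (w + 1) m = superH x b (k + 1) w m - b (w + 1) * superH x b k w m := by
  have hterm (r : ℕ) : (-1 : R) ^ (r + 1) * epoly (r + 1) (w + 1) b * hpoly (k - r) m x
      = (-1) ^ (r + 1) * epoly (r + 1) w b * hpoly (k - r) m x
        - b (w + 1) * ((-1) ^ r * epoly r w b * hpoly (k - r) m x) := by
    rw [epoly_succ_succ]; ring
  simp only [superH, sum_range_succ' _ (k + 1), Nat.add_sub_add_right, hterm, sum_sub_distrib,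
    mul_sum, epoly_zero]
  ring

theorem superH_succ_succ_vars (k w m : ℕ) :
    superH x b (k + 1) w (m + 1) = superH x b (k + 1) w m + x (m + 1) * superH x b k w (m + 1) := by
  have hterm : ∀ r ∈ range (k + 1), (-1 : R) ^ r * epoly r w b * hpoly (k + 1 - r) (m + 1) x
      = (-1) ^ r * epoly r w b * hpoly (k + 1 - r) m x
        + x (m + 1) * ((-1) ^ r * epoly r w b * hpoly (k - r) (m + 1) x) := by
    intro r hr
    rw [show k + 1 - r = k - r + 1 by simp at hr; omega, hpoly_succ_succ]
    ring
  simp only [superH, sum_range_succ _ (k + 1)]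
  rw [sum_congr rfl hterm, sum_add_distrib, mul_sum, Nat.sub_self, hpoly_zero, hpoly_zero]
  ring

/-- `b 0` occurs on neither side of the theorem (`epoly_update_zero`, `weight_update_zero`);
normalising it to `0` makes this recursion uniform in `w`. -/
theorem superH_succ_succ (hb0 : b 0 = 0) (k w m : ℕ) :
    superH x b (k + 1) w (m + 1)
      = superH x b (k + 1) (w - 1) m + (x (m + 1) - b w) * superH x b k (w - 1) (m + 1) := by
  cases w with
  | zero => simpa [hb0] using superH_succ_succ_vars x b k 0 m
  | succ w =>
    rw [Nat.add_sub_cancel, superH_succ_left_succ, superH_succ_succ_vars]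
    ring

def entry (L M r j : ℕ) : R :=
  if L + j < r then 0 else superH x b (L + j - r) (L + M - (r + 1)) M

theorem entry_of_lt {L M r j : ℕ} (h : L + j < r) : entry x b L M r j = 0 :=
  if_pos h

theorem entry_of_eq {L M r j : ℕ} (h : L + j = r) : entry x b L M r j = 1 := by
  rw [entry, if_neg (by omega), show L + j - r = 0 by omega, superH_zero]

theorem entry_zero_flag {L : ℕ} (hL : 1 ≤ L) (j : ℕ) : entry x b L 0 0 j = 0 := by
  rw [entry, if_neg (by omega), superH_zero_vars, epoly_of_lt b (by omega), mul_zero]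

theorem entry_pred_length {L : ℕ} (hL : 1 ≤ L) (M s j : ℕ) :
    entry x b (L - 1) M s j = entry x b L M (s + 1) j := by
  unfold entry
  split_ifs <;> first | rfl | omega | congr 1 <;> omega

theorem entry_eq_add (hb0 : b 0 = 0) {L M : ℕ} (hL : 1 ≤ L) (hM : 1 ≤ M) (r j : ℕ) :
    entry x b L M r j
      = entry x b L (M - 1) r j + (x M - b (L + M - (r + 1))) * entry x b (L - 1) M r j := by
  rcases lt_trichotomy (L + j) r with h | h | h
  · rw [entry_of_lt x b h, entry_of_lt x b h, entry_of_lt x b (by omega)]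
    ring
  · rw [entry_of_eq x b h, entry_of_eq x b h, entry_of_lt x b (by omega)]
    ring
  · obtain ⟨k, hk⟩ : ∃ k, L + j - r = k + 1 := ⟨L + j - r - 1, by omega⟩
    obtain ⟨M', rfl⟩ : ∃ M', M = M' + 1 := ⟨M - 1, by omega⟩
    simp only [entry, if_neg (show ¬ L + j < r by omega), if_neg (show ¬ L - 1 + j < r by omega)]
    rw [hk, superH_succ_succ x b hb0, Nat.add_sub_cancel, show L - 1 + j - r = k by omega,
      show L + M' - (r + 1) = L + (M' + 1) - (r + 1) - 1 by omega,
      show L - 1 + (M' + 1) - (r + 1) = L + (M' + 1) - (r + 1) - 1 by omega]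

theorem entry_update_zero (a : R) : entry x (update b 0 a) = entry x b := by
  funext L M r j
  simp only [entry, superH, epoly_update_zero]

/-- `Matrix.of (Pmat n μ m x b)` is `entryMatrix x b n μ.rowLen m` by definition. -/
def entryMatrix (n : ℕ) (ℓ f : ℕ → ℕ) : Matrix (Fin n) (Fin n) R :=
  Matrix.of fun i j => entry x b (ℓ i) (f i) i j

theorem entryMatrix_row_congr {n : ℕ} {ℓ ℓ' f f' : ℕ → ℕ} {i : Fin n}
    (hℓ : ℓ' i = ℓ i) (hf : f' i = f i) :
    entryMatrix x b n ℓ' f' i = entryMatrix x b n ℓ f i := by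
  funext j
  simp [entryMatrix, hℓ, hf]

theorem det_entryMatrix_eq_add (hb0 : b 0 = 0) {n : ℕ} {ℓ f : ℕ → ℕ} (r : Fin n)
    (hL : 1 ≤ ℓ r) (hM : 1 ≤ f r) :
    (entryMatrix x b n ℓ f).det = (entryMatrix x b n ℓ (update f r (f r - 1))).det
      + (x (f r) - b (ℓ r + f r - (r + 1)))
        * (entryMatrix x b n (update ℓ r (ℓ r - 1)) f).det := by
  refine Matrix.det_eq_add_mul_det_of_row_eq
    (fun i hi => entryMatrix_row_congr x b rfl (update_of_ne (Fin.val_ne_of_ne hi) _ _))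
    (fun i hi => entryMatrix_row_congr x b (update_of_ne (Fin.val_ne_of_ne hi) _ _) rfl) ?_
  funext j
  simp [entryMatrix, entry_eq_add x b hb0 hL hM]

theorem det_entryMatrix_update_of_eq (hb0 : b 0 = 0) {n : ℕ} {ℓ f : ℕ → ℕ} {s : ℕ}
    (hs : s + 1 < n) (hℓ : ℓ (s + 1) = ℓ s) (hf : f (s + 1) = f s) (hL : 1 ≤ ℓ s)
    (hM : 1 ≤ f s) :
    (entryMatrix x b n ℓ (update f s (f s - 1))).det = (entryMatrix x b n ℓ f).det := by
  symm
  refine Matrix.det_eq_of_row_eq_add_smul_row (r := ⟨s, by omega⟩) (s := ⟨s + 1, hs⟩)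
    (F := x (f s) - b (ℓ s + f s - (s + 1))) (by simp)
    (fun i hi => entryMatrix_row_congr x b rfl (update_of_ne (Fin.val_ne_of_ne hi) _ _)) ?_
  funext j
  simp only [entryMatrix, Matrix.of_apply, Pi.add_apply, Pi.smul_apply, smul_eq_mul,
    update_self, update_of_ne (show s + 1 ≠ s by omega)]
  rw [hℓ, hf, entry_eq_add x b hb0 hL hM, entry_pred_length x b hL]

theorem det_entryMatrix_succ {n : ℕ} {ℓ : ℕ → ℕ} (f : ℕ → ℕ) (hℓ : ℓ n = 0) :
    (entryMatrix x b (n + 1) ℓ f).det = (entryMatrix x b n ℓ f).det := by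
  refine Matrix.det_succ_eq_of_last_row_eq_single (funext fun j => ?_)
  rcases (Fin.le_last j).lt_or_eq with hj | rfl
  · have hjn : 0 + (j : ℕ) < n := by simpa [Fin.lt_def] using hj
    simp [entryMatrix, hℓ, entry_of_lt x b hjn, hj.ne]
  · simp [entryMatrix, hℓ, entry_of_eq x b]

theorem det_entryMatrix_eq_zero {n : ℕ} {ℓ f : ℕ → ℕ} (hn : 0 < n) (hℓ : 1 ≤ ℓ 0)
    (hf : f 0 = 0) :
    (entryMatrix x b n ℓ f).det = 0 :=
  Matrix.det_eq_zero_of_row_eq_zero ⟨0, hn⟩ fun j => by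
    simp [entryMatrix, hf, entry_zero_flag x b hℓ]

def flagSet (μ : YoungDiagram) (m : ℕ → ℕ) : Set (SemistandardYoungTableau μ) :=
  {T | ∀ i j, (i, j) ∈ μ → T i j < m i}

def weight (μ : YoungDiagram) (T : SemistandardYoungTableau μ) : R :=
  ∏ u ∈ μ.cells, (x (T u.1 u.2 + 1) - b (T u.1 u.2 + 1 + u.2 - u.1))

theorem weight_update_zero {μ : YoungDiagram} (T : SemistandardYoungTableau μ) (a : R) :
    weight x (update b 0 a) μ T = weight x b μ T :=
  prod_congr rfl fun u hu => by
    have := T.le_apply_of_mem ((YoungDiagram.mem_cells _).1 hu)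
    rw [update_of_ne (by omega)]

theorem flagSet_finite (μ : YoungDiagram) (m : ℕ → ℕ) : (flagSet μ m).Finite := by
  let f : SemistandardYoungTableau μ → μ.cells → ℕ := fun T u => T u.1.1 u.1.2
  have hf : f.Injective := fun T T' h => SemistandardYoungTableau.ext fun i j => by
    by_cases hij : (i, j) ∈ μ
    · exact congrFun h ⟨(i, j), (YoungDiagram.mem_cells _).2 hij⟩
    · rw [T.zeros hij, T'.zeros hij]
  refine Set.Finite.of_finite_image
    ((Set.Finite.pi fun _ => Set.finite_Iio (μ.cells.sup fun u => m u.1)).subset ?_) hf.injOn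
  rintro _ ⟨T, hT, rfl⟩ u -
  exact (hT _ _ ((YoungDiagram.mem_cells _).1 u.2)).trans_le
    (le_sup (f := fun u : ℕ × ℕ => m u.1) u.2)

theorem mem_flagSet_update_pred {μ : YoungDiagram} {m : ℕ → ℕ} {s : ℕ}
    {T : SemistandardYoungTableau μ} :
    T ∈ flagSet μ (update m s (m s - 1))
      ↔ T ∈ flagSet μ m ∧ ∀ j, (s, j) ∈ μ → T s j < m s - 1 := by
  refine ⟨fun hT => ⟨fun i j hij => ?_, fun j hj => by simpa using hT s j hj⟩,
    fun ⟨hT, hs⟩ i j hij => ?_⟩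
  · have := hT i j hij
    by_cases hi : i = s
    · subst hi
      rw [update_self] at this
      omega
    · rwa [update_of_ne hi] at this
  · by_cases hi : i = s
    · subst hi
      rw [update_self]
      exact hs j hij
    · rw [update_of_ne hi]
      exact hT i j hij

theorem flagSet_update_of_rowLen_eq {μ : YoungDiagram} {m : ℕ → ℕ} {s : ℕ}
    (hs : μ.rowLen (s + 1) = μ.rowLen s) (hm : m (s + 1) = m s) :
    flagSet μ (update m s (m s - 1)) = flagSet μ m := by
  ext T
  refine ⟨fun hT => (mem_flagSet_update_pred.1 hT).1,
    fun hT => mem_flagSet_update_pred.2 ⟨hT, fun j hj => ?_⟩⟩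
  have hcell : (s + 1, j) ∈ μ :=
    YoungDiagram.mem_iff_lt_rowLen.2 (hs ▸ YoungDiagram.mem_iff_lt_rowLen.1 hj)
  have := T.col_strict (Nat.lt_add_one s) hcell
  have := hT _ _ hcell
  omega

theorem finsum_flagSet_eq_add {μ : YoungDiagram} {m : ℕ → ℕ} {r k : ℕ} (hc : (r, k) ∈ μ)
    (hr : (r, k + 1) ∉ μ) (g : SemistandardYoungTableau μ → R) :
    ∑ᶠ T ∈ flagSet μ m, g T = ∑ᶠ T ∈ flagSet μ (update m r (m r - 1)), g T
      + ∑ᶠ T ∈ {T ∈ flagSet μ m | T r k = m r - 1}, g T := by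
  have hsplit : flagSet μ m
      = flagSet μ (update m r (m r - 1)) ∪ {T ∈ flagSet μ m | T r k = m r - 1} := by
    ext T
    simp only [Set.mem_union, Set.mem_ofPred_eq, mem_flagSet_update_pred]
    refine ⟨fun hT => ?_, by rintro (h | h) <;> exact h.1⟩
    refine (em (T r k = m r - 1)).elim (fun hv => Or.inr ⟨hT, hv⟩)
      fun hv => Or.inl ⟨hT, fun j hj => ?_⟩
    have hjk : j ≤ k := not_lt.1 fun h => hr (μ.up_left_mem le_rfl h hj)
    have := T.row_weak_of_le hjk hc
    have := hT r k hc
    omega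
  have hdisj : Disjoint (flagSet μ (update m r (m r - 1)))
      {T ∈ flagSet μ m | T r k = m r - 1} :=
    Set.disjoint_left.2 fun T h₁ h₂ => by
      have := (mem_flagSet_update_pred.1 h₁).2 k hc
      have := h₂.2
      omega
  rw [← finsum_mem_union hdisj
    ((flagSet_finite _ _).subset fun _ h => (mem_flagSet_update_pred.1 h).1)
    ((flagSet_finite μ m).subset fun _ h => h.1), ← hsplit]

open SemistandardYoungTableau YoungDiagram in
theorem finsum_corner_eq_mul {μ : YoungDiagram} {m : ℕ → ℕ} {r k : ℕ} (hc : (r, k) ∈ μ)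
    (hd : (r + 1, k) ∉ μ) (hr : (r, k + 1) ∉ μ) (hM : 1 ≤ m r)
    (habove : ∀ i < r, m i < m r) :
    ∑ᶠ T ∈ {T ∈ flagSet μ m | T r k = m r - 1}, weight x b μ T
      = (x (m r) - b (m r + k - r))
        * ∑ᶠ T ∈ flagSet (μ.eraseCorner r k hd hr) m, weight x b _ T := by
  rw [mul_finsum_mem' _ _ (flagSet_finite _ _)]
  refine finsum_mem_eq_of_bijOn (fun T => T.restrict eraseCorner_le) ⟨?_, ?_, ?_⟩ ?_
  · rintro T ⟨hT, -⟩ i j hij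
    rw [restrict_apply_of_mem _ _ hij]
    exact hT i j (eraseCorner_le hij)
  · rintro T ⟨-, hT⟩ T' ⟨-, hT'⟩ h
    ext i j
    by_cases hij : (i, j) = (r, k)
    · obtain ⟨rfl, rfl⟩ := Prod.ext_iff.1 hij
      rw [hT, hT']
    by_cases hmem : (i, j) ∈ μ
    · have hmem' : (i, j) ∈ μ.eraseCorner r k hd hr := mem_eraseCorner.2 ⟨hij, hmem⟩
      simpa [restrict_apply_of_mem _ _ hmem'] using congrFun (DFunLike.congr_fun h i) j
    · rw [T.zeros hmem, T'.zeros hmem]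
  · intro T' hT'
    have hrow (j : ℕ) (hj : j < k) : T' r j ≤ m r - 1 := by
      have := hT' r j (mem_eraseCorner.2 ⟨by simp; omega, μ.up_left_mem le_rfl hj.le hc⟩)
      omega
    have hcol (i : ℕ) (hi : i < r) : T' i k < m r - 1 := by
      have := hT' i k (mem_eraseCorner.2 ⟨by simp; omega, μ.up_left_mem hi.le le_rfl hc⟩)
      have := habove i hi
      omega
    refine ⟨T'.insertCorner hc (m r - 1) hrow hcol,
      ⟨fun i j hij => ?_, by simp [insertCorner_apply]⟩, restrict_insertCorner _ _ _ _ _⟩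
    rw [insertCorner_apply]
    split_ifs with h
    · obtain ⟨rfl, rfl⟩ := Prod.mk.inj h
      omega
    · exact hT' i j (mem_eraseCorner.2 ⟨h, hij⟩)
  · rintro T ⟨-, hT⟩
    rw [weight, ← mul_prod_erase _ _ ((mem_cells _).2 hc), weight]
    congr 1
    · simp only [hT, show m r - 1 + 1 = m r by omega]
    · refine prod_congr rfl fun u hu => ?_
      rw [restrict_apply_of_mem _ _ ((mem_cells _).1 hu)]

theorem monotoneOn_update_pred {m : ℕ → ℕ} {n p : ℕ} (hm : MonotoneOn m (Set.Iio n))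
    (hp : ∀ i < p, m i < m p) : MonotoneOn (update m p (m p - 1)) (Set.Iio n) := by
  intro i hi j hj hij
  simp only [update_apply]
  split_ifs with h₁ h₂ h₂
  · rfl
  · subst h₁
    have := hm hi hj hij
    omega
  · subst h₂
    have := hp i (lt_of_le_of_ne hij h₁)
    omega
  · exact hm hi hj hij

theorem exists_first_eq {m : ℕ → ℕ} {n r : ℕ} (hm : MonotoneOn m (Set.Iio n)) (hr : r < n) :
    ∃ p ≤ r, m p = m r ∧ ∀ i < p, m i < m p := by
  classical
  have hex : ∃ t, m t = m r := ⟨r, rfl⟩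
  have hpr : Nat.find hex ≤ r := Nat.find_min' hex rfl
  refine ⟨Nat.find hex, hpr, Nat.find_spec hex, fun i hi => lt_of_le_of_ne ?_ ?_⟩
  · exact hm (show i < n by omega) (show Nat.find hex < n by omega) hi.le
  · rw [Nat.find_spec hex]
    exact Nat.find_min hex hi

theorem sum_range_update_pred (m : ℕ → ℕ) {n p : ℕ} (hp : p < n) (hm : 1 ≤ m p) :
    ∑ i ∈ range n, update m p (m p - 1) i + 1 = ∑ i ∈ range n, m i := by
  rw [sum_update_of_mem (mem_range.2 hp), sdiff_singleton_eq_erase,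
    ← add_sum_erase _ m (mem_range.2 hp)]
  omega

def JacobiTrudiHolds (n : ℕ) (μ : YoungDiagram) (m : ℕ → ℕ) : Prop :=
  (entryMatrix x b n μ.rowLen m).det = ∑ᶠ T ∈ flagSet μ m, weight x b μ T

theorem jacobiTrudiHolds_zero {μ : YoungDiagram} (hl : μ.colLen 0 ≤ 0) (m : ℕ → ℕ) :
    JacobiTrudiHolds x b 0 μ m := by
  obtain rfl := YoungDiagram.eq_bot_of_colLen_zero (Nat.le_zero.1 hl)
  have hT : flagSet ⊥ m = {SemistandardYoungTableau.highestWeight ⊥} := by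
    ext T
    refine ⟨fun _ => SemistandardYoungTableau.ext fun i j => ?_,
      fun _ i j h => absurd h (YoungDiagram.notMem_bot _)⟩
    rw [T.zeros (YoungDiagram.notMem_bot _), SemistandardYoungTableau.highestWeight_apply,
      if_neg (YoungDiagram.notMem_bot _)]
  rw [JacobiTrudiHolds, Matrix.det_fin_zero, hT, finsum_mem_singleton, weight,
    YoungDiagram.cells_bot, prod_empty]

theorem JacobiTrudiHolds.succ {n : ℕ} {μ : YoungDiagram} {m : ℕ → ℕ}
    (h : JacobiTrudiHolds x b n μ m) (hn : μ.rowLen n = 0) : JacobiTrudiHolds x b (n + 1) μ m :=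
  (det_entryMatrix_succ x b m hn).trans h

theorem jacobiTrudiHolds_of_flag_zero {n : ℕ} {μ : YoungDiagram} {m : ℕ → ℕ} (hn : 0 < n)
    (hμ : (0, 0) ∈ μ) (hm : m 0 = 0) : JacobiTrudiHolds x b n μ m := by
  have hT : flagSet μ m = ∅ := Set.eq_empty_of_forall_notMem fun T hT => by
    have := hT 0 0 hμ
    omega
  rw [JacobiTrudiHolds, det_entryMatrix_eq_zero x b hn (YoungDiagram.mem_iff_lt_rowLen.1 hμ) hm,
    hT, finsum_mem_empty]

theorem JacobiTrudiHolds.of_update_of_rowLen_eq (hb0 : b 0 = 0) {n : ℕ} {μ : YoungDiagram}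
    {m : ℕ → ℕ} {s : ℕ} (h : JacobiTrudiHolds x b n μ (update m s (m s - 1)))
    (hs : s + 1 < n) (hℓ : μ.rowLen (s + 1) = μ.rowLen s) (hf : m (s + 1) = m s)
    (hL : 1 ≤ μ.rowLen s) (hM : 1 ≤ m s) : JacobiTrudiHolds x b n μ m := by
  rw [JacobiTrudiHolds, ← det_entryMatrix_update_of_eq x b hb0 hs hℓ hf hL hM, h,
    flagSet_update_of_rowLen_eq hℓ hf]

theorem JacobiTrudiHolds.of_eraseCorner (hb0 : b 0 = 0) {n : ℕ} {μ : YoungDiagram}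
    {m : ℕ → ℕ} {r k : ℕ} (hc : (r, k) ∈ μ) (hd : (r + 1, k) ∉ μ) (hr : (r, k + 1) ∉ μ)
    (hrn : r < n) (hM : 1 ≤ m r) (habove : ∀ i < r, m i < m r)
    (h₁ : JacobiTrudiHolds x b n μ (update m r (m r - 1)))
    (h₂ : JacobiTrudiHolds x b n (μ.eraseCorner r k hd hr) m) : JacobiTrudiHolds x b n μ m := by
  have hlen := YoungDiagram.rowLen_eq_succ_of_mem_of_notMem hc hr
  rw [JacobiTrudiHolds, YoungDiagram.rowLen_eraseCorner hc] at h₂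
  rw [JacobiTrudiHolds, det_entryMatrix_eq_add x b hb0 ⟨r, hrn⟩ (by simp [hlen]) hM]
  simp only [hlen, Nat.add_sub_cancel] at h₂ ⊢
  rw [h₁, h₂, finsum_flagSet_eq_add (m := m) hc hr, finsum_corner_eq_mul x b hc hd hr hM habove,
    show k + 1 + m r - (r + 1) = m r + k - r by omega]

theorem jacobiTrudiHolds (hb0 : b 0 = 0) {n : ℕ} {μ : YoungDiagram} {m : ℕ → ℕ}
    (hl : μ.colLen 0 ≤ n) (hm : MonotoneOn m (Set.Iio n)) : JacobiTrudiHolds x b n μ m := by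
  induction hN : n + μ.cells.card + ∑ i ∈ range n, m i using Nat.strong_induction_on
    generalizing n μ m with
  | _ N ih =>
  subst hN
  obtain _ | n := n
  · exact jacobiTrudiHolds_zero x b hl m
  by_cases hlast : μ.rowLen n = 0
  · refine (ih _ ?_ (YoungDiagram.colLen_zero_le_of_rowLen_eq_zero hlast)
      (hm.mono (Set.Iio_subset_Iio n.le_succ)) rfl).succ x b hlast
    rw [sum_range_succ]
    omega
  have h00 : (0, 0) ∈ μ :=
    μ.up_left_mem (Nat.zero_le n) le_rfl (YoungDiagram.mem_iff_lt_rowLen.2 (by omega))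
  by_cases hm0 : m 0 = 0
  · exact jacobiTrudiHolds_of_flag_zero x b n.succ_pos h00 hm0
  obtain ⟨r, k, hc, hd, hr, hblock⟩ := μ.exists_top_block h00
  have hrn : r < n + 1 :=
    (YoungDiagram.mem_iff_lt_colLen.1 (μ.up_left_mem le_rfl (Nat.zero_le k) hc)).trans_le hl
  obtain ⟨p, hpr, hpr', hpmin⟩ := exists_first_eq hm hrn
  have hpM : 1 ≤ m p := le_trans (by omega) (hm (by simp) (by simp; omega) (Nat.zero_le p))
  have hsum := sum_range_update_pred m (show p < n + 1 by omega) hpM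
  have h₁ := ih _ (by omega) hl (monotoneOn_update_pred hm hpmin) rfl
  rcases hpr.lt_or_eq with hpr | rfl
  · have hp1 : m (p + 1) = m p :=
      le_antisymm (hpr' ▸ hm (by simp; omega) (by simpa using hrn) hpr)
        (hm (by simp; omega) (by simp; omega) p.le_succ)
    refine h₁.of_update_of_rowLen_eq x b hb0 (by omega) ?_ hp1
      (by rw [hblock p hpr.le]; omega) hpM
    rw [hblock p hpr.le, hblock (p + 1) hpr]
  · have hcard := YoungDiagram.card_cells_eraseCorner (hd := hd) (hr := hr) hc
    exact h₁.of_eraseCorner x b hb0 hc hd hr hrn hpM hpmin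
      (ih _ (by omega) ((μ.colLen_eraseCorner_le 0).trans hl) hm rfl)

end FlaggedJacobiTrudi

/-- Mathlib tableaux have entries in `{0, 1, 2, …}`: the entry of the mathematical tableau is
`T i j + 1`, so the flag condition `T(i,j) ≤ m_i` reads `T i j < m i`; rows and `m` are
0-indexed. -/
theorem flagged_jacobi_trudi_general (n : ℕ) (μ : YoungDiagram) (hl : μ.colLen 0 ≤ n)
    (m : ℕ → ℕ)
    (hmincr : ∀ i j, i ≤ j → j < n → m i ≤ m j) :
    Matrix.det (Matrix.of (Pmat n μ m xv bv))
      = ∑ᶠ T ∈ {T : SemistandardYoungTableau μ | ∀ i j, (i, j) ∈ μ → T i j < m i},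
          ∏ u ∈ μ.cells, (xv (T u.1 u.2 + 1) - bv (T u.1 u.2 + 1 + u.2 - u.1)) := by
  have h := FlaggedJacobiTrudi.jacobiTrudiHolds xv (Function.update bv 0 0)
    (Function.update_self _ _ _) hl fun i _ j hj hij => hmincr i j hij hj
  simp only [FlaggedJacobiTrudi.JacobiTrudiHolds, FlaggedJacobiTrudi.entryMatrix,
    FlaggedJacobiTrudi.entry_update_zero, FlaggedJacobiTrudi.weight_update_zero] at h
  exact h

/-- **Flagged Jacobi–Trudi type identity.** For a partition `μ` with `ℓ(μ) ≤ n` and a weakly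
increasing sequence `m` of positive integers (the flag), with indeterminates `x`, `b`:
`det[P_{i,j}^{μ,m}(x | b)]_{i,j=1}^n
  = Σ_{T ∈ SSYT(μ; m)} Π_{(i,j) ∈ μ} (x_{T(i,j)} - b_{T(i,j)+j-i})`,
the sum over flagged semistandard Young tableaux of shape `μ` with flag `m`.
(Mathlib `SemistandardYoungTableau`s have entries in `{0, 1, 2, …}`; the 1-indexed entry of
the mathematical tableau is `T i j + 1`, and the flag condition `T(i,j) ≤ m_i` reads
`T i j < m i`; `m` is 0-indexed by rows.) -/
theorem flagged_jacobi_trudi (n : ℕ) (μ : YoungDiagram) (hl : μ.colLen 0 ≤ n)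
    (m : ℕ → ℕ) (hmpos : ∀ i, i < n → 1 ≤ m i)
    (hmincr : ∀ i j, i ≤ j → j < n → m i ≤ m j) :
    Matrix.det (Matrix.of (Pmat n μ m xv bv))
      = ∑ᶠ T ∈ {T : SemistandardYoungTableau μ | ∀ i j, (i, j) ∈ μ → T i j < m i},
          ∏ u ∈ μ.cells, (xv (T u.1 u.2 + 1) - bv (T u.1 u.2 + 1 + u.2 - u.1)) :=
  flagged_jacobi_trudi_general n μ hl m hmincr
end
end

section
/- Let n ≥ 1, s ≥ 1 and k be integers with k + s ≥ 0, let x_1, …, x_n be indeterminates and (b_c)_{c ∈ ℤ} parameters. Consider directed lattice paths L from (−s+1, 1) to (k+1, n) using unit up steps and unit right steps, where a horizontal step from (r,t) to (r+1,t) has weight x_t − b_{r+t}, and w(L) is the product of the weights of all horizontal steps of L. Then Σ_L w(L) = Σ_{r=0}^{k+s} (−1)^r e_r( b_{−s+2}, b_{−s+3}, …, b_{k+n} ) · h_{k+s−r}( x_1, …, x_n ). -/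
open scoped Classical

noncomputable section

/-- A directed lattice path of length `len` in `ℤ × ℤ` from `A` to `B`, using unit right
steps `(r,t) → (r+1,t)` and unit up steps `(r,t) → (r,t+1)`, encoded as the sequence of its
vertices (constantly `B` after step `len`, so that the path is determined by finitely many
values). -/
def IsLatticePath (len : ℕ) (A B : ℤ × ℤ) (L : ℕ → ℤ × ℤ) : Prop :=
  L 0 = A ∧ (∀ k, len ≤ k → L k = B) ∧
    ∀ k, k < len → L (k + 1) = ((L k).1 + 1, (L k).2) ∨ L (k + 1) = ((L k).1, (L k).2 + 1)

/-- The weight of a lattice path: the product over its horizontal steps `(r,t) → (r+1,t)` of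
`x t - b (r + t)`. -/
def pathWeight {R : Type} [CommRing R] (len : ℕ) (x b : ℤ → R) (L : ℕ → ℤ × ℤ) : R :=
  ∏ k ∈ Finset.range len,
    if L (k + 1) = ((L k).1 + 1, (L k).2) then x (L k).2 - b ((L k).1 + (L k).2) else 1

/-- The polynomial ring `ℚ[x_c, b_c : c ∈ ℤ]`. -/
abbrev R7 : Type := MvPolynomial (ℤ ⊕ ℤ) ℚ

/-- The indeterminates `x c`, `c ∈ ℤ`. -/
def xz : ℤ → R7 := fun c => MvPolynomial.X (Sum.inl c)

/-- The indeterminates `b c`, `c ∈ ℤ`. -/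
def bz : ℤ → R7 := fun c => MvPolynomial.X (Sum.inr c)

/-- A version of `e_r` in variables `b_c` indexed by a finite set of integers. -/
def epolyZ (r : ℕ) (S : Finset ℤ) (b : ℤ → R7) : R7 :=
  ∑ T ∈ S.powersetCard r, ∏ c ∈ T, b c

/-- The complete homogeneous symmetric polynomial `h_k(x_1, …, x_m)`. -/
def hpolyZ (k m : ℕ) (x : ℤ → R7) : R7 :=
  ∑ α ∈ Finset.Nat.antidiagonalTuple m k, ∏ i : Fin m, x ((i : ℤ) + 1) ^ α i

/-!
Splitting off the first step of a path gives
`P((a,1) → B) = (x_1 - b_{a+1}) P((a+1,1) → B) + P((a,2) → B)`, and translating a path by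
`(1,-1)` keeps every weight index `r + t`, so the last term is a path sum of the same shape in
the variables `x_2, x_3, …`. The right-hand side is the coefficient of `z^m` in
`∏_c (1 - b_c z) · H(z)` with `H(z) = Σ_j h_j(x_1, …, x_n) z^j = ∏_i (1 - x_i z)⁻¹`; removing
`b_{a+1}` from the first factor and `x_1` from the second gives the same recursion, so both
sides agree by induction on the length of the paths.
-/

open Finset PowerSeries

def consSeq {α : Type*} (a : α) (f : ℕ → α) : ℕ → α
  | 0 => a
  | k + 1 => f k

lemma consSeq_injective {α : Type*} (a : α) : Function.Injective (consSeq a) :=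
  fun _ _ h => funext fun k => congrFun h (k + 1)

section LatticePaths

variable {R : Type} [CommRing R]

def latticePaths (len : ℕ) (A B : ℤ × ℤ) : Set (ℕ → ℤ × ℤ) := {L | IsLatticePath len A B L}

def pathSum (x b : ℤ → R) (len : ℕ) (A B : ℤ × ℤ) : R :=
  ∑ᶠ L ∈ latticePaths len A B, pathWeight len x b L

lemma latticePaths_zero (A B : ℤ × ℤ) :
    latticePaths 0 A B = if A = B then {fun _ => B} else ∅ := by
  ext L
  simp only [latticePaths, IsLatticePath, Set.mem_ofPred_eq, zero_le, forall_const,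
    Nat.not_lt_zero, false_imp_iff, and_true]
  split_ifs with h
  · subst h
    exact ⟨fun hL => funext hL.2, fun hL => by subst hL; exact ⟨rfl, fun _ => rfl⟩⟩
  · exact ⟨fun hL => h (hL.1.symm.trans (hL.2 0)), False.elim⟩

lemma latticePaths_succ (len : ℕ) (A B : ℤ × ℤ) :
    latticePaths (len + 1) A B =
      consSeq A '' latticePaths len (A.1 + 1, A.2) B ∪
        consSeq A '' latticePaths len (A.1, A.2 + 1) B := by
  ext L
  constructor
  · rintro ⟨h0, hend, hstep⟩
    have htail : ∀ C, L 1 = C → IsLatticePath len C B (fun k => L (k + 1)) := fun C hC =>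
      ⟨hC, fun k hk => hend _ (by omega), fun k hk => hstep (k + 1) (by omega)⟩
    have hcons : consSeq A (fun k => L (k + 1)) = L := by
      funext k
      cases k with
      | zero => exact h0.symm
      | succ k => rfl
    have h1 := hstep 0 (Nat.succ_pos _)
    rw [h0] at h1
    rcases h1 with h1 | h1
    · exact Or.inl ⟨_, htail _ h1, hcons⟩
    · exact Or.inr ⟨_, htail _ h1, hcons⟩
  · have hcons : ∀ C L', (C = (A.1 + 1, A.2) ∨ C = (A.1, A.2 + 1)) →
        IsLatticePath len C B L' → IsLatticePath (len + 1) A B (consSeq A L') := by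
      rintro C L' hC ⟨h0, hend, hstep⟩
      refine ⟨rfl, fun k hk => ?_, fun k hk => ?_⟩
      · obtain ⟨j, rfl⟩ : ∃ j, k = j + 1 := ⟨k - 1, by omega⟩
        exact hend j (by omega)
      · cases k with
        | zero => rw [consSeq, consSeq, h0]; exact hC
        | succ j => exact hstep j (by omega)
    rintro (⟨L', hL', rfl⟩ | ⟨L', hL', rfl⟩)
    · exact hcons _ _ (Or.inl rfl) hL'
    · exact hcons _ _ (Or.inr rfl) hL'

lemma latticePaths_finite (len : ℕ) (A B : ℤ × ℤ) : (latticePaths len A B).Finite := by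
  induction len generalizing A with
  | zero => rw [latticePaths_zero]; split_ifs <;> simp
  | succ len ih => rw [latticePaths_succ]; exact ((ih _).image _).union ((ih _).image _)

lemma pathWeight_cons (len : ℕ) (x b : ℤ → R) (A : ℤ × ℤ) (L : ℕ → ℤ × ℤ) :
    pathWeight (len + 1) x b (consSeq A L) =
      (if L 0 = (A.1 + 1, A.2) then x A.2 - b (A.1 + A.2) else 1) * pathWeight len x b L := by
  rw [pathWeight, Finset.prod_range_succ', mul_comm]
  rfl

lemma pathSum_zero (x b : ℤ → R) (A B : ℤ × ℤ) :
    pathSum x b 0 A B = if A = B then 1 else 0 := by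
  rw [pathSum, latticePaths_zero]
  split_ifs <;> simp [pathWeight]

lemma pathSum_succ (x b : ℤ → R) (len : ℕ) (A B : ℤ × ℤ) :
    pathSum x b (len + 1) A B =
      (x A.2 - b (A.1 + A.2)) * pathSum x b len (A.1 + 1, A.2) B +
        pathSum x b len (A.1, A.2 + 1) B := by
  have hdisj : Disjoint (consSeq A '' latticePaths len (A.1 + 1, A.2) B)
      (consSeq A '' latticePaths len (A.1, A.2 + 1) B) := by
    rw [Set.disjoint_left]
    rintro _ ⟨L, hL, rfl⟩ ⟨L', hL', hLL'⟩
    have := congrArg (fun L => (L 1).1) hLL'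
    simp only [consSeq] at this
    rw [hL.1, hL'.1] at this
    simp at this
  rw [pathSum, latticePaths_succ, finsum_mem_union hdisj ((latticePaths_finite _ _ _).image _)
    ((latticePaths_finite _ _ _).image _), finsum_mem_image (consSeq_injective A).injOn,
    finsum_mem_image (consSeq_injective A).injOn, pathSum, pathSum,
    mul_finsum_mem' _ _ (latticePaths_finite _ _ _)]
  congr 1 <;> refine finsum_mem_congr rfl fun L hL => ?_ <;> rw [pathWeight_cons, hL.1]
  · rw [if_pos rfl]
  · rw [if_neg (by simp), one_mul]

lemma pathSum_eq_zero_of_lt (x b : ℤ → R) (len : ℕ) {A B : ℤ × ℤ} (h : B.1 < A.1 ∨ B.2 < A.2) :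
    pathSum x b len A B = 0 := by
  induction len generalizing A with
  | zero =>
    rw [pathSum_zero, if_neg]
    rintro rfl
    omega
  | succ len ih => rw [pathSum_succ, ih (by omega), ih (by omega), mul_zero, add_zero]

lemma pathSum_translate (x b : ℤ → R) (d : ℤ) (len : ℕ) (p q p' q' : ℤ) :
    pathSum x b len (p, q + d) (p', q' + d) =
      pathSum (fun t => x (t + d)) b len (p + d, q) (p' + d, q') := by
  induction len generalizing p q with
  | zero => simp only [pathSum_zero, Prod.mk.injEq, add_left_inj]
  | succ len ih =>
    simp only [pathSum_succ]
    rw [add_right_comm q d 1, ih, ih, add_right_comm p 1 d, ← add_assoc, add_right_comm p q d]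

end LatticePaths

lemma Multiset.Nat.antidiagonalTuple_succ (k n : ℕ) :
    Multiset.Nat.antidiagonalTuple (k + 1) n =
      (Multiset.Nat.antidiagonal n).bind fun p =>
        (Multiset.Nat.antidiagonalTuple k p.2).map (Fin.cons p.1) := by
  simp only [Multiset.Nat.antidiagonalTuple, List.Nat.antidiagonalTuple, Multiset.Nat.antidiagonal,
    Multiset.coe_bind, Multiset.map_coe]

lemma Finset.Nat.sum_antidiagonalTuple_succ {M : Type*} [AddCommMonoid M] (k n : ℕ)
    (f : (Fin (k + 1) → ℕ) → M) :
    ∑ α ∈ antidiagonalTuple (k + 1) n, f α =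
      ∑ p ∈ antidiagonal n, ∑ β ∈ antidiagonalTuple k p.2, f (Fin.cons p.1 β) := by
  simp only [Finset.sum_eq_multiset_sum, Finset.Nat.antidiagonalTuple,
    Multiset.Nat.antidiagonalTuple_succ, Multiset.map_bind, Multiset.sum_bind, Multiset.map_map]
  rfl

lemma PowerSeries.one_sub_C_mul_X_mul_mk_pow {S : Type*} [CommRing S] (a : S) :
    (1 - C a * X) * PowerSeries.mk (a ^ ·) = 1 := by
  have := congrArg (rescale a) (mk_one_mul_one_sub_eq_one S)
  rw [map_mul, rescale_mk, map_sub, map_one, rescale_X] at this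
  simpa [mul_comm] using this

lemma hpolyZ_zero_vars (j : ℕ) (x : ℤ → R7) : hpolyZ j 0 x = if j = 0 then 1 else 0 := by
  cases j <;> simp [hpolyZ, Finset.Nat.antidiagonalTuple_zero_zero,
    Finset.Nat.antidiagonalTuple_zero_succ]

lemma hpolyZ_succ_vars (j n : ℕ) (x : ℤ → R7) :
    hpolyZ j (n + 1) x = ∑ p ∈ antidiagonal j, x 1 ^ p.1 * hpolyZ p.2 n (fun t => x (t + 1)) := by
  rw [hpolyZ, Finset.Nat.sum_antidiagonalTuple_succ]
  refine sum_congr rfl fun p _ => ?_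
  rw [hpolyZ, mul_sum]
  refine sum_congr rfl fun β _ => ?_
  simp [Fin.prod_univ_succ]

def hSeries (n : ℕ) (x : ℤ → R7) : PowerSeries R7 := PowerSeries.mk fun j => hpolyZ j n x

lemma hSeries_zero (x : ℤ → R7) : hSeries 0 x = 1 := by
  refine PowerSeries.ext fun j => ?_
  simp [hSeries, hpolyZ_zero_vars, coeff_one]

lemma one_sub_C_mul_X_mul_hSeries_succ (n : ℕ) (x : ℤ → R7) :
    (1 - C (x 1) * X) * hSeries (n + 1) x = hSeries n (fun t => x (t + 1)) := by
  have h : hSeries (n + 1) x = PowerSeries.mk (x 1 ^ ·) * hSeries n (fun t => x (t + 1)) := by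
    refine PowerSeries.ext fun j => ?_
    rw [coeff_mul, hSeries, coeff_mk, hpolyZ_succ_vars]
    simp [hSeries]
  rw [h, ← mul_assoc, one_sub_C_mul_X_mul_mk_pow, one_mul]

lemma epolyZ_insert (r : ℕ) {c : ℤ} {S : Finset ℤ} (hc : c ∉ S) (b : ℤ → R7) :
    epolyZ (r + 1) (insert c S) b = epolyZ (r + 1) S b + b c * epolyZ r S b := by
  simp only [epolyZ, ← esymm_map_val, insert_val_of_notMem hc, Multiset.map_cons, Multiset.esymm,
    Multiset.powersetCard_cons, Multiset.map_add, Multiset.sum_add, Multiset.map_map,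
    Function.comp_def, Multiset.prod_cons, Multiset.sum_map_mul_left]

def eSeries (S : Finset ℤ) (b : ℤ → R7) : PowerSeries R7 :=
  PowerSeries.mk fun r => (-1) ^ r * epolyZ r S b

lemma eSeries_insert {c : ℤ} {S : Finset ℤ} (hc : c ∉ S) (b : ℤ → R7) :
    eSeries (insert c S) b = (1 - C (b c) * X) * eSeries S b := by
  refine PowerSeries.ext fun r => ?_
  cases r with
  | zero => simp [eSeries, epolyZ]
  | succ r =>
    simp only [eSeries, sub_mul, one_mul, map_sub, mul_assoc, coeff_C_mul, coeff_succ_X_mul,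
      coeff_mk, epolyZ_insert r hc, pow_succ]
    ring

lemma coeff_eSeries_of_card_lt {r : ℕ} {S : Finset ℤ} (b : ℤ → R7) (h : S.card < r) :
    coeff r (eSeries S b) = 0 := by
  simp [eSeries, epolyZ, powersetCard_eq_empty.2 h]

lemma coeff_eSeries_mul_hSeries (m n : ℕ) (S : Finset ℤ) (x b : ℤ → R7) :
    coeff m (eSeries S b * hSeries n x) =
      ∑ r ∈ range (m + 1), (-1) ^ r * epolyZ r S b * hpolyZ (m - r) n x := by
  rw [coeff_mul, Nat.sum_antidiagonal_eq_sum_range_succ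
    (fun i j => coeff i (eSeries S b) * coeff j (hSeries n x))]
  simp [eSeries, hSeries]

theorem pathSum_eq_coeff_eSeries_mul_hSeries (N : ℕ) (a : ℤ) (x b : ℤ → R7) (m v : ℕ)
    (hN : m + v = N) :
    pathSum x b N (a, 1) (a + m, 1 + v) =
      coeff m (eSeries (Icc (a + 1) (a + N)) b * hSeries (v + 1) x) := by
  induction N generalizing a x m v with
  | zero =>
    obtain ⟨rfl, rfl⟩ : m = 0 ∧ v = 0 := by omega
    simp [pathSum_zero, coeff_eSeries_mul_hSeries, epolyZ, hpolyZ,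
      Finset.Nat.antidiagonalTuple_zero_right]
  | succ N ih =>
    set I := Icc (a + 1 + 1) (a + 1 + N)
    have hI : Icc (a + 1) (a + (N + 1 : ℕ)) = insert (a + 1) I := by
      ext c
      simp only [I, mem_Icc, mem_insert]
      omega
    have first : pathSum x b N (a + 1, 1) (a + m, 1 + v) =
        coeff m (X * (eSeries I b * hSeries (v + 1) x)) := by
      cases m with
      | zero => rw [pathSum_eq_zero_of_lt _ _ _ (by simp), coeff_zero_X_mul]
      | succ m =>
        rw [coeff_succ_X_mul, ← ih (a + 1) x m v (by omega)]
        congr 2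
        push_cast
        ring
    have second : pathSum x b N (a, 1 + 1) (a + m, 1 + v) =
        coeff m (eSeries I b * hSeries v (fun t => x (t + 1))) := by
      cases v with
      | zero =>
        rw [pathSum_eq_zero_of_lt _ _ _ (by simp), hSeries_zero, mul_one,
          coeff_eSeries_of_card_lt]
        simp only [I, Int.card_Icc]
        omega
      | succ v =>
        rw [show ((1 : ℤ) + (v + 1 : ℕ)) = 1 + v + 1 by push_cast; ring, pathSum_translate,
          ← ih (a + 1) _ m v (by omega), add_right_comm]
    rw [pathSum_succ]
    dsimp only
    rw [first, second, hI, eSeries_insert (by simp [I]), ← one_sub_C_mul_X_mul_hSeries_succ,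
      ← coeff_C_mul, ← map_add]
    congr 1
    rw [map_sub]
    ring

theorem lattice_path_sum_general (n s : ℕ) (hn : 1 ≤ n) (k : ℤ) (hk : 0 ≤ k + s) :
    (∑ᶠ L ∈ {L : ℕ → ℤ × ℤ |
        IsLatticePath (k + s + n - 1).toNat (1 - s, 1) (k + 1, n) L},
        pathWeight (k + s + n - 1).toNat xz bz L)
    = ∑ r ∈ Finset.range ((k + s).toNat + 1),
        (-1) ^ r * epolyZ r (Finset.Icc (2 - (s : ℤ)) (k + n)) bz *
          hpolyZ ((k + s).toNat - r) n xz := by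
  obtain ⟨v, rfl⟩ : ∃ v, n = v + 1 := ⟨n - 1, by omega⟩
  set m := (k + s).toNat
  have hm : (m : ℤ) = k + s := Int.toNat_of_nonneg hk
  have hlen : (k + s + ((v + 1 : ℕ) : ℤ) - 1).toNat = m + v := by omega
  have hend : (k + 1, ((v + 1 : ℕ) : ℤ)) = (1 - (s : ℤ) + m, 1 + (v : ℤ)) := by
    ext <;> push_cast <;> omega
  have hIcc :
      Icc (2 - (s : ℤ)) (k + (v + 1 : ℕ)) = Icc (1 - (s : ℤ) + 1) (1 - s + (m + v : ℕ)) := by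
    congr 1 <;> push_cast <;> omega
  change pathSum xz bz _ (1 - s, 1) _ = _
  rw [hlen, hend, hIcc, ← coeff_eSeries_mul_hSeries,
    pathSum_eq_coeff_eSeries_mul_hSeries _ _ _ _ _ _ rfl]

/-- **Weighted lattice path enumeration.** For `n, s ≥ 1` and `k ∈ ℤ` with `k + s ≥ 0`,
the sum of weights of up-right lattice paths from `(-s+1, 1)` to `(k+1, n)` (where a
horizontal step `(r,t) → (r+1,t)` has weight `x_t - b_{r+t}`) equals
`Σ_{r=0}^{k+s} (-1)^r e_r(b_{-s+2}, …, b_{k+n}) h_{k+s-r}(x_1, …, x_n)`. -/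
theorem lattice_path_sum (n s : ℕ) (hn : 1 ≤ n) (hs : 1 ≤ s) (k : ℤ) (hk : 0 ≤ k + s) :
    (∑ᶠ L ∈ {L : ℕ → ℤ × ℤ |
        IsLatticePath (k + s + n - 1).toNat (1 - s, 1) (k + 1, n) L},
        pathWeight (k + s + n - 1).toNat xz bz L)
    = ∑ r ∈ Finset.range ((k + s).toNat + 1),
        (-1) ^ r * epolyZ r (Finset.Icc (2 - (s : ℤ)) (k + n)) bz *
          hpolyZ ((k + s).toNat - r) n xz :=
  lattice_path_sum_general n s hn k hk
end
end

section
/- Let λ be a Young diagram with ℓ(λ) ≤ n, let x_1,…,x_n, y_1,y_2,… be indeterminates, and let a^λ be the associated parameter sequence. Then: (a) for every partition μ with ℓ(μ) ≤ n and μ ⊄ λ, s_μ(x_1,…,x_n | a^λ) = 0; and (b) s_λ(x_1,…,x_n | a^λ) = Π_{(i,j) ∈ λ} ( x_i − y_j ). -/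
open scoped Classical

noncomputable section

/-- The parameter sequence `a^lam` associated to a Young diagram `lam` with `ℓ(lam) ≤ n`:
reading the southeast boundary of `lam`, the vertical step at height `i` (which is at
position `lam_i + n - i + 1`, i.e. `lam.rowLen i' + n - i'` for the 0-indexed row `i'`)
contributes `x_i`, and the horizontal step in column `j` contributes `y_j`
(the `r`-th boundary step is horizontal in column `j = r - #{vertical steps below it}`). -/
def aSeq {K : Type} [Field K] (n : ℕ) (lam : YoungDiagram) (x y : ℕ → K) : ℕ → K :=
  fun r =>
    if ∃ i ∈ Finset.range n, lam.rowLen i + n - i = r then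
      x ((Finset.range n).filter (fun i => r ≤ lam.rowLen i + n - i)).card
    else y (r - ((Finset.range n).filter (fun i => lam.rowLen i + n - i < r)).card)

/-- The field of rational functions over `ℚ` in the indeterminates `x i` and `y j`. -/
abbrev KXY : Type := FractionRing (MvPolynomial (ℕ ⊕ ℕ) ℚ)

/-- The indeterminates `x i`. -/
def xK : ℕ → KXY := fun i => algebraMap (MvPolynomial (ℕ ⊕ ℕ) ℚ) KXY (MvPolynomial.X (Sum.inl i))

/-- The indeterminates `y j`. -/
def yK : ℕ → KXY := fun j => algebraMap (MvPolynomial (ℕ ⊕ ℕ) ℚ) KXY (MvPolynomial.X (Sum.inr j))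

/-!
Write `p i = λ_i + n - i` for the position at which `a^λ` takes the value `x_{i+1}`
(rows `i < n` counted from 0); these positions strictly decrease with `i`. The `(i, j)` entry
`∏_{r ≤ μ_j + n - 1 - j} (x_{i+1} - a_r)` contains the factor `x_{i+1} - a_{p i} = 0` as soon
as `λ_i - i < μ_j - j`. If `λ_k < μ_k`, this kills every entry with `j ≤ k ≤ i`, a block of
zeros that no permutation can avoid, so the determinant vanishes. For `μ = λ` it kills every
entry below the diagonal, and in the diagonal entry of row `i` the parameters `a_r`,
`r < p i`, are `x_{i'+1}` for the `n - 1 - i` rows `i' > i` and `y_1, …, y_{λ_i}` otherwise: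
the first factors make up the Vandermonde product, the others the cells of row `i`.
-/

open Finset

theorem Equiv.Perm.exists_le_le_apply {ι : Type*} [Fintype ι] [LinearOrder ι]
    (σ : Equiv.Perm ι) (k : ι) : ∃ j ≤ k, k ≤ σ j := by
  by_contra! h
  have hmaps : ∀ j ∈ univ.filter (· ≤ k), σ j ∈ univ.filter (· < k) := by
    intro j hj
    simpa using h j (by simpa using hj)
  have hlt : univ.filter (· < k) ⊂ univ.filter (· ≤ k) :=
    ⟨monotone_filter_right _ fun _ _ => le_of_lt,
      fun hsub => by simpa using hsub (x := k) (by simp)⟩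
  exact (card_lt_card hlt).not_ge (card_le_card_of_injOn σ hmaps σ.injective.injOn)

theorem Matrix.det_eq_zero_of_forall_le_le {ι R : Type*} [Fintype ι] [LinearOrder ι]
    [CommRing R] {M : Matrix ι ι R} (k : ι) (hM : ∀ i j, j ≤ k → k ≤ i → M i j = 0) :
    M.det = 0 := by
  refine M.det_apply.trans (sum_eq_zero fun σ _ => ?_)
  obtain ⟨j, hjk, hkσ⟩ := σ.exists_le_le_apply k
  exact smul_eq_zero_of_right _ (prod_eq_zero (mem_univ j) (hM (σ j) j hjk hkσ))

namespace YoungDiagram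

theorem le_of_forall_rowLen_le {μ ν : YoungDiagram} (h : ∀ i, μ.rowLen i ≤ ν.rowLen i) :
    μ ≤ ν := by
  intro ⟨i, j⟩ hij
  exact mem_iff_lt_rowLen.2 ((mem_iff_lt_rowLen.1 hij).trans_le (h i))

theorem lt_colLen_zero_of_rowLen_pos {μ : YoungDiagram} {i : ℕ} (h : 0 < μ.rowLen i) :
    i < μ.colLen 0 :=
  mem_iff_lt_colLen.1 (mem_iff_lt_rowLen.2 h)

theorem prod_cells_eq_prod_range_rowLen {M : Type*} [CommMonoid M] {μ : YoungDiagram} {n : ℕ}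
    (hn : μ.colLen 0 ≤ n) (g : ℕ × ℕ → M) :
    ∏ u ∈ μ.cells, g u = ∏ i ∈ range n, ∏ j ∈ range (μ.rowLen i), g (i, j) := by
  refine prod_finset_product _ _ _ fun ⟨i, j⟩ => ?_
  simp only [mem_cells, mem_range, mem_iff_lt_rowLen]
  exact ⟨fun hj => ⟨(lt_colLen_zero_of_rowLen_pos (j.zero_le.trans_lt hj)).trans_le hn, hj⟩,
    And.right⟩

theorem strictAntiOn_rowLen_add_sub (μ : YoungDiagram) (n : ℕ) :
    StrictAntiOn (fun i => μ.rowLen i + n - i) (Set.Iic n) := by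
  intro i _ j hj hij
  have := μ.rowLen_anti i j hij.le
  rw [Set.mem_Iic] at hj
  dsimp only
  omega

theorem card_filter_rowLen_add_sub_le (μ : YoungDiagram) (n m : ℕ) :
    #{i ∈ range n | μ.rowLen i + n - i ≤ m} ≤ m := by
  set V : Finset ℕ := {i ∈ range n | μ.rowLen i + n - i ≤ m}
  have hmaps : Set.MapsTo (fun i => μ.rowLen i + n - i) V (Icc 1 m) := fun i hi => by
    obtain ⟨hi, hle⟩ := mem_filter.1 hi
    rw [mem_range] at hi
    exact mem_Icc.2 ⟨show 1 ≤ μ.rowLen i + n - i by omega, hle⟩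
  have hinj : Set.InjOn (fun i => μ.rowLen i + n - i) V :=
    (μ.strictAntiOn_rowLen_add_sub n).injOn.mono fun i hi =>
      Set.mem_Iic.2 (mem_range.1 (mem_filter.1 hi).1).le
  simpa using card_le_card_of_injOn _ hmaps hinj

end YoungDiagram

section aSeq

variable {K : Type} [Field K] {n : ℕ} (lam : YoungDiagram) (x y : ℕ → K)

theorem aSeq_rowLen_add_sub {i : ℕ} (hi : i < n) :
    aSeq n lam x y (lam.rowLen i + n - i) = x (i + 1) := by
  rw [aSeq, if_pos ⟨i, mem_range.2 hi, rfl⟩]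
  congr 1
  convert card_range (i + 1) using 2
  ext i'
  simp only [mem_filter, mem_range]
  refine ⟨fun ⟨hi', hle⟩ => ?_, fun hi' => ⟨by omega, ?_⟩⟩
  · have := ((lam.strictAntiOn_rowLen_add_sub n).le_iff_ge hi.le hi'.le).1 hle
    omega
  · exact ((lam.strictAntiOn_rowLen_add_sub n).le_iff_ge hi.le (Set.mem_Iic.2 (by omega))).2
      (by omega)

theorem prod_Icc_sub_aSeq (z : K) (m : ℕ) :
    ∏ r ∈ Icc 1 m, (z - aSeq n lam x y r)
      = (∏ i ∈ range n with lam.rowLen i + n - i ≤ m, (z - x (i + 1)))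
        * ∏ j ∈ range (m - #{i ∈ range n | lam.rowLen i + n - i ≤ m}), (z - y (j + 1)) := by
  have hf := lam.strictAntiOn_rowLen_add_sub n
  induction m with
  | zero =>
    rw [filter_false_of_mem fun i hi => by rw [mem_range] at hi; omega]
    simp
  | succ m ih =>
    rw [prod_Icc_succ_top (Nat.le_add_left 1 m), ih]
    set V := {i ∈ range n | lam.rowLen i + n - i ≤ m}
    by_cases hpos : ∃ i ∈ range n, lam.rowLen i + n - i = m + 1
    · obtain ⟨i₀, hi₀, hpos⟩ := hpos
      rw [mem_range] at hi₀
      have hi₀V : i₀ ∉ V := by rw [mem_filter]; omega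
      have hV : {i ∈ range n | lam.rowLen i + n - i ≤ m + 1} = insert i₀ V := by
        ext i
        simp only [V, mem_filter, mem_range, mem_insert]
        constructor
        · rintro ⟨hi, hle⟩
          rcases hle.lt_or_eq with hlt | heq
          · exact Or.inr ⟨hi, by omega⟩
          · exact Or.inl ((hf.eq_iff_eq hi₀.le hi.le).1 (hpos.trans heq.symm))
        · rintro (rfl | ⟨hi, hle⟩)
          exacts [⟨hi₀, hpos.le⟩, ⟨hi, hle.trans m.le_succ⟩]
      rw [hV, prod_insert hi₀V, card_insert_of_notMem hi₀V, ← hpos,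
        aSeq_rowLen_add_sub lam x y hi₀, hpos, Nat.add_sub_add_right]
      ring
    · push Not at hpos
      have hcard : #V ≤ m := lam.card_filter_rowLen_add_sub_le n m
      have hV : {i ∈ range n | lam.rowLen i + n - i ≤ m + 1} = V :=
        filter_congr fun i hi => by have := hpos i hi; omega
      have hV' : {i ∈ range n | lam.rowLen i + n - i < m + 1} = V :=
        filter_congr fun i _ => Nat.lt_succ_iff
      rw [aSeq, if_neg (by simpa using hpos), hV, hV', Nat.sub_add_comm hcard, prod_range_succ]
      ring

theorem prod_Icc_sub_aSeq_eq_zero {i m : ℕ} (hi : i < n) (hm : lam.rowLen i + n - i ≤ m) :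
    ∏ r ∈ Icc 1 m, (x (i + 1) - aSeq n lam x y r) = 0 :=
  prod_eq_zero (mem_Icc.2 ⟨by omega, hm⟩) (by rw [aSeq_rowLen_add_sub lam x y hi, sub_self])

theorem prod_Icc_sub_aSeq_rowLen {i : ℕ} (hi : i < n) (z : K) :
    ∏ r ∈ Icc 1 (lam.rowLen i + (n - 1 - i)), (z - aSeq n lam x y r)
      = (∏ i' ∈ Ioo i n, (z - x (i' + 1)))
        * ∏ j ∈ range (lam.rowLen i), (z - y (j + 1)) := by
  have hV : {i' ∈ range n | lam.rowLen i' + n - i' ≤ lam.rowLen i + (n - 1 - i)} = Ioo i n := by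
    ext i'
    simp only [mem_filter, mem_range, mem_Ioo]
    refine ⟨fun ⟨hi', hle⟩ => ⟨?_, hi'⟩, fun ⟨hii', hi'⟩ => ⟨hi', ?_⟩⟩
    · exact ((lam.strictAntiOn_rowLen_add_sub n).lt_iff_gt hi'.le hi.le).1 (by omega)
    · have := ((lam.strictAntiOn_rowLen_add_sub n).lt_iff_gt hi'.le hi.le).2 hii'
      omega
  rw [prod_Icc_sub_aSeq, hV, Nat.card_Ioo,
    show lam.rowLen i + (n - 1 - i) - (n - i - 1) = lam.rowLen i by omega]

end aSeq

theorem vdm_eq_prod_range {K : Type} [Field K] (n : ℕ) (x : ℕ → K) :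
    vdm n x = ∏ i ∈ range n, ∏ j ∈ Ioo i n, (x (i + 1) - x (j + 1)) := by
  rw [← prod_finset_product' {p ∈ range n ×ˢ range n | p.1 < p.2} _ _
    fun p => by simp only [mem_filter, mem_product, mem_range, mem_Ioo]; omega]
  refine prod_nbij' (fun p => (p.1 - 1, p.2 - 1)) (fun p => (p.1 + 1, p.2 + 1))
    ?_ ?_ ?_ ?_ ?value <;> intro p hp <;>
    simp only [mem_filter, mem_product, mem_Icc, mem_range] at hp
  case value => rw [Nat.sub_add_cancel hp.1.1.1, Nat.sub_add_cancel hp.1.2.1]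
  all_goals simp only [mem_filter, mem_product, mem_Icc, mem_range, Prod.ext_iff]; omega

theorem vdm_ne_zero {K : Type} [Field K] {x : ℕ → K} (hx : Function.Injective x) (n : ℕ) :
    vdm n x ≠ 0 :=
  prod_ne_zero_iff.2 fun _ hp => sub_ne_zero.2 (hx.ne (mem_filter.1 hp).2.ne)

theorem xK_injective : Function.Injective xK :=
  (IsFractionRing.injective (MvPolynomial (ℕ ⊕ ℕ) ℚ) KXY).comp
    (MvPolynomial.X_injective.comp Sum.inl_injective)

/-- **Vanishing property of factorial Schur polynomials at `a = a^lam`.** For `lam` with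
`ℓ(lam) ≤ n` and indeterminates `x`, `y`:
(a) `s_μ(x_1,…,x_n | a^lam) = 0` for every partition `μ` with `ℓ(μ) ≤ n` and `μ ⊄ lam`;
(b) `s_lam(x_1,…,x_n | a^lam) = Π_{(i,j) ∈ lam} (x_i - y_j)`
(cells 0-indexed, so `(x_i - y_j)` for the cell `u` reads `x (u.1+1) - y (u.2+1)`). -/
theorem facSchur_aSeq_vanishing (n : ℕ) (lam : YoungDiagram) (hlam : lam.colLen 0 ≤ n) :
    (∀ μ : YoungDiagram, μ.colLen 0 ≤ n → ¬μ ≤ lam →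
      facSchur n (fun k => μ.rowLen k) xK (aSeq n lam xK yK) = 0) ∧
    facSchur n (fun k => lam.rowLen k) xK (aSeq n lam xK yK)
      = ∏ u ∈ lam.cells, (xK (u.1 + 1) - yK (u.2 + 1)) := by
  refine ⟨fun μ hμ hμlam => ?_, ?_⟩
  · obtain ⟨k, hk⟩ : ∃ k, lam.rowLen k < μ.rowLen k := by
      by_contra! h
      exact hμlam (YoungDiagram.le_of_forall_rowLen_le h)
    have hkn : k < n := (YoungDiagram.lt_colLen_zero_of_rowLen_pos (by omega)).trans_le hμ
    rw [facSchur, Matrix.det_eq_zero_of_forall_le_le ⟨k, hkn⟩ fun i j hjk hki => ?_, zero_div]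
    have hlam_ki := lam.rowLen_anti k i hki
    have hμ_jk := μ.rowLen_anti j k hjk
    exact prod_Icc_sub_aSeq_eq_zero lam xK yK i.isLt (by omega)
  · rw [facSchur, div_eq_iff (vdm_ne_zero xK_injective n), Matrix.det_of_isUpperTriangular]
    · simp only [Matrix.of_apply]
      rw [Fin.prod_univ_eq_prod_range (fun i => ∏ r ∈ Icc 1 (lam.rowLen i + (n - 1 - i)),
          (xK (i + 1) - aSeq n lam xK yK r)),
        prod_congr rfl fun i hi => prod_Icc_sub_aSeq_rowLen lam xK yK (mem_range.1 hi) _,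
        prod_mul_distrib, vdm_eq_prod_range, YoungDiagram.prod_cells_eq_prod_range_rowLen hlam,
        mul_comm]
    · intro i j hji
      have hlam_ji := lam.rowLen_anti j i hji.le
      exact prod_Icc_sub_aSeq_eq_zero lam xK yK i.isLt (by rw [id, id] at hji; omega)
end
end
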